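/- arXiv:2302.09283 — 5 statements merged into one kernel-verified Lean document; each statement's English description precedes it below -/
import Mathlib

section
/- Let n ≥ 5 be an integer. For every spanning tree G of the square cycle C_n^2, there exist unique integers j, k with 0 ≤ j ≤ n-1 and 0 ≤ k ≤ ⌈(n-2)/2⌉ such that every edge of G is an edge of the strip graph with tails S_{n,k,j}. Equivalently, the set of spanning trees of C_n^2 is the disjoint union, over 0 ≤ k ≤ ⌈(n-2)/2⌉ and 0 ≤ j ≤ n-1, of the sets of spanning trees of S_{n,k,j}. -/
open SimpleGraph

/-- The square cycle `C_n^2`: vertices `ZMod n`, with `u ~ v` iff `u - v ≡ ±1, ±2 (mod n)`. -/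
def squareCycle (n : ℕ) : SimpleGraph (ZMod n) :=
  SimpleGraph.fromRel (fun u v => u - v = 1 ∨ u - v = 2)

/-- The frame `e_i = {v_i, v_{i+1}}`. -/
def frame (n : ℕ) (i : ℤ) : Sym2 (ZMod n) := s(((i : ZMod n)), (((i + 1 : ℤ) : ZMod n)))

/-- The window `f_i = {v_i, v_{i+2}}`. -/
def window (n : ℕ) (i : ℤ) : Sym2 (ZMod n) := s(((i : ZMod n)), (((i + 2 : ℤ) : ZMod n)))

/-- The triangle `T_i = {e_i, e_{i+1}, f_i}`. -/
def triangle (n : ℕ) (i : ℤ) : Set (Sym2 (ZMod n)) :=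
  {frame n i, frame n (i + 1), window n i}

/-- A subgraph of `C_n^2` is convex if for every triangle `T_i`, either at most one of its
edges is in `G` or all three of them are. -/
def IsConvex (n : ℕ) (G : SimpleGraph (ZMod n)) : Prop :=
  ∀ i : ℤ, (triangle n i ∩ G.edgeSet).ncard ≤ 1 ∨ triangle n i ⊆ G.edgeSet

/-- The escape route `ES(n,k,j) = {f_j, f_{j+2k+1}} ∪ {e_{j+1}, …, e_{j+2k+1}}`. -/
def escapeRoute (n : ℕ) (k j : ℤ) : Set (Sym2 (ZMod n)) :=
  {window n j, window n (j + 2 * k + 1)} ∪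
    frame n '' {i : ℤ | j + 1 ≤ i ∧ i ≤ j + 2 * k + 1}

/-- The strip graph with tails `S_{n,k,j}`, obtained from `C_n^2` by deleting the
escape route `ES(n,k,j)`. -/
def stripTails (n : ℕ) (k j : ℤ) : SimpleGraph (ZMod n) :=
  (squareCycle n).deleteEdges (escapeRoute n k j)

/-- A connected spanning subgraph of `C_n^2` is trivial if it is `C_n^2` itself or
(for odd `n`) the subgraph whose edges are all the windows. -/
def IsTrivialSub (n : ℕ) (G : SimpleGraph (ZMod n)) : Prop :=
  G = squareCycle n ∨ (Odd n ∧ G.edgeSet = Set.range (window n))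

/-- The number of spanning trees of `G`, i.e. of subgraphs `H ≤ G` (on the same vertex
set) which are trees. -/
noncomputable def numSpanningTrees {V : Type*} (G : SimpleGraph V) : ℕ :=
  Nat.card {H : SimpleGraph V // H ≤ G ∧ H.IsTree}

/-- The strip graph `S_m`: vertices `1, …, m` (here `Fin m`), with `i ~ j` iff
`1 ≤ |i - j| ≤ 2`. -/
def strip (m : ℕ) : SimpleGraph (Fin m) :=
  SimpleGraph.fromRel (fun i j => (j : ℤ) = (i : ℤ) + 1 ∨ (j : ℤ) = (i : ℤ) + 2)

-- my defs
def efr (n : ℕ) (v : ZMod n) : Sym2 (ZMod n) := s(v, v + 1)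
def ewi (n : ℕ) (v : ZMod n) : Sym2 (ZMod n) := s(v, v + 2)

def Cand (n : ℕ) (E : Set (Sym2 (ZMod n))) (p : ZMod n) (d : ℕ) : Prop :=
  1 ≤ d ∧ d ≤ n ∧ ewi n p ∉ E ∧ ewi n (p + (d : ℕ)) ∉ E ∧
    ∀ s : ℕ, 1 ≤ s → s ≤ d → efr n (p + (s : ℕ)) ∉ E

lemma cast_eq_iff {n : ℕ} (hn : 5 ≤ n) {a b : ℕ} (ha : a ≤ n) (hb : b ≤ n) :
    ((a : ZMod n) = (b : ZMod n)) ↔ (a = b ∨ a + n = b ∨ b + n = a) := by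
  rw [ZMod.natCast_eq_natCast_iff]
  unfold Nat.ModEq
  constructor
  · intro h
    rcases Nat.lt_or_ge a n with h1 | h1
    · rcases Nat.lt_or_ge b n with h2 | h2
      · left; rwa [Nat.mod_eq_of_lt h1, Nat.mod_eq_of_lt h2] at h
      · have hb' : b = n := le_antisymm hb h2
        rw [hb', Nat.mod_eq_of_lt h1, Nat.mod_self] at h; omega
    · have ha' : a = n := le_antisymm ha h1
      rw [ha', Nat.mod_self] at h
      rcases Nat.lt_or_ge b n with h2 | h2
      · rw [Nat.mod_eq_of_lt h2] at h; omega
      · have : b = n := le_antisymm hb h2; omega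
  · rintro (rfl | h | h)
    · rfl
    · rw [← h, Nat.add_mod_right]
    · rw [← h, Nat.add_mod_right]

lemma cast_ne {n : ℕ} (hn : 5 ≤ n) {a b : ℕ} (ha : a ≤ 4) (hb : b ≤ 4) (hne : a ≠ b) :
    (a : ZMod n) ≠ (b : ZMod n) := by
  intro h
  rw [cast_eq_iff hn (by omega) (by omega)] at h
  omega

lemma squareCycle_adj {n : ℕ} {u v : ZMod n} :
    (squareCycle n).Adj u v ↔ u ≠ v ∧ (v = u + 1 ∨ u = v + 1 ∨ v = u + 2 ∨ u = v + 2) := by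
  simp only [squareCycle, SimpleGraph.fromRel_adj]
  constructor
  · rintro ⟨hne, (h | h) | (h | h)⟩ <;> refine ⟨hne, ?_⟩
    · right; left; linear_combination h
    · right; right; right; linear_combination h
    · left; linear_combination h
    · right; right; left; linear_combination h
  · rintro ⟨hne, h | h | h | h⟩ <;> refine ⟨hne, ?_⟩
    · right; left; linear_combination h
    · left; left; linear_combination h
    · right; right; linear_combination h
    · left; right; linear_combination h

lemma two_ne {n : ℕ} (hn : 5 ≤ n) : (2 : ZMod n) ≠ 0 := by
  have := cast_ne hn (a := 2) (b := 0) (by norm_num) (by norm_num) (by norm_num)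
  simpa using this

lemma three_ne {n : ℕ} (hn : 5 ≤ n) : (3 : ZMod n) ≠ 0 := by
  have := cast_ne hn (a := 3) (b := 0) (by norm_num) (by norm_num) (by norm_num)
  simpa using this

lemma four_ne {n : ℕ} (hn : 5 ≤ n) : (4 : ZMod n) ≠ 0 := by
  have := cast_ne hn (a := 4) (b := 0) (by norm_num) (by norm_num) (by norm_num)
  simpa using this

lemma one_ne_two' {n : ℕ} (hn : 5 ≤ n) : (1 : ZMod n) ≠ 2 := by
  have := cast_ne hn (a := 1) (b := 2) (by norm_num) (by norm_num) (by norm_num)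
  simpa using this

lemma efr_inj {n : ℕ} (hn : 5 ≤ n) : Function.Injective (efr n) := by
  intro u v h
  rw [efr, efr, Sym2.eq_iff] at h
  rcases h with ⟨h1, _⟩ | ⟨h1, h2⟩
  · exact h1
  · exfalso
    exact two_ne hn (by linear_combination h2 - h1)

lemma ewi_inj {n : ℕ} (hn : 5 ≤ n) : Function.Injective (ewi n) := by
  intro u v h
  rw [ewi, ewi, Sym2.eq_iff] at h
  rcases h with ⟨h1, _⟩ | ⟨h1, h2⟩
  · exact h1
  · exfalso
    exact four_ne hn (by linear_combination h2 - h1)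

lemma efr_ne_ewi {n : ℕ} (hn : 5 ≤ n) (u v : ZMod n) : efr n u ≠ ewi n v := by
  intro h
  rw [efr, ewi, Sym2.eq_iff] at h
  rcases h with ⟨h1, h2⟩ | ⟨h1, h2⟩
  · exact one_ne_two' hn (by linear_combination h2 - h1)
  · exact three_ne hn (by linear_combination h2 - h1)

open scoped Classical in
noncomputable def Fset (n : ℕ) [NeZero n] (E : Set (Sym2 (ZMod n))) : Finset (ZMod n) :=
  Finset.univ.filter (fun v => efr n v ∈ E)

open scoped Classical in
noncomputable def Wset (n : ℕ) [NeZero n] (E : Set (Sym2 (ZMod n))) : Finset (ZMod n) :=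
  Finset.univ.filter (fun v => ewi n v ∉ E)

lemma mem_Fset {n : ℕ} [NeZero n] {E : Set (Sym2 (ZMod n))} {v : ZMod n} :
    v ∈ Fset n E ↔ efr n v ∈ E := by
  simp [Fset]

lemma mem_Wset {n : ℕ} [NeZero n] {E : Set (Sym2 (ZMod n))} {v : ZMod n} :
    v ∈ Wset n E ↔ ewi n v ∉ E := by
  simp [Wset]

lemma count_lemma {n : ℕ} [NeZero n] (hn : 5 ≤ n) (G : SimpleGraph (ZMod n))
    (hle : G ≤ squareCycle n) (htree : G.IsTree) :
    (Wset n G.edgeSet).card = (Fset n G.edgeSet).card + 1 := by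
  classical
  have hcard : G.edgeFinset.card + 1 = n := by
    have := htree.card_edgeFinset
    rwa [ZMod.card] at this
  set Pset : Finset (ZMod n) := Finset.univ.filter (fun v => ewi n v ∈ G.edgeSet) with hP
  have hsplit : G.edgeFinset = (Fset n G.edgeSet).image (efr n) ∪ Pset.image (ewi n) := by
    apply Finset.Subset.antisymm
    · intro e he
      rw [SimpleGraph.mem_edgeFinset] at he
      induction e using Sym2.ind with
      | _ u v =>
        have hadj : G.Adj u v := he
        rcases (squareCycle_adj.mp (hle hadj)).2 with h | h | h | h
        · refine Finset.mem_union_left _ (Finset.mem_image.mpr ⟨u, ?_, ?_⟩)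
          · rw [mem_Fset, show efr n u = s(u, v) by rw [efr, h]]
            exact he
          · rw [efr, h]
        · refine Finset.mem_union_left _ (Finset.mem_image.mpr ⟨v, ?_, ?_⟩)
          · rw [mem_Fset, show efr n v = s(u, v) by rw [efr, h, Sym2.eq_swap]]
            exact he
          · rw [efr, h, Sym2.eq_swap]
        · refine Finset.mem_union_right _ (Finset.mem_image.mpr ⟨u, ?_, ?_⟩)
          · rw [hP, Finset.mem_filter]
            refine ⟨Finset.mem_univ _, ?_⟩
            rw [show ewi n u = s(u, v) by rw [ewi, h]]
            exact he
          · rw [ewi, h]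
        · refine Finset.mem_union_right _ (Finset.mem_image.mpr ⟨v, ?_, ?_⟩)
          · rw [hP, Finset.mem_filter]
            refine ⟨Finset.mem_univ _, ?_⟩
            rw [show ewi n v = s(u, v) by rw [ewi, h, Sym2.eq_swap]]
            exact he
          · rw [ewi, h, Sym2.eq_swap]
    · intro e he
      rw [SimpleGraph.mem_edgeFinset]
      rcases Finset.mem_union.mp he with h | h
      · obtain ⟨u, hu, rfl⟩ := Finset.mem_image.mp h
        exact mem_Fset.mp hu
      · obtain ⟨u, hu, rfl⟩ := Finset.mem_image.mp h
        exact (Finset.mem_filter.mp hu).2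
  have hdisj : Disjoint ((Fset n G.edgeSet).image (efr n)) (Pset.image (ewi n)) := by
    rw [Finset.disjoint_left]
    rintro e he1 he2
    obtain ⟨u, _, rfl⟩ := Finset.mem_image.mp he1
    obtain ⟨v, _, hv⟩ := Finset.mem_image.mp he2
    exact efr_ne_ewi hn u v hv.symm
  have hc1 : G.edgeFinset.card = (Fset n G.edgeSet).card + Pset.card := by
    rw [hsplit, Finset.card_union_of_disjoint hdisj,
      Finset.card_image_of_injective _ (efr_inj hn),
      Finset.card_image_of_injective _ (ewi_inj hn)]
  have hc2 : Pset.card + (Wset n G.edgeSet).card = n := by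
    have := Finset.card_filter_add_card_filter_not
      (s := (Finset.univ : Finset (ZMod n))) (p := fun v => ewi n v ∈ G.edgeSet)
    rw [Finset.card_univ, ZMod.card] at this
    have h2 : Wset n G.edgeSet = Finset.univ.filter (fun a => ewi n a ∉ G.edgeSet) := by
      ext a; simp [Wset]
    rw [hP, h2]
    exact this
  omega

lemma cand_exists {n : ℕ} [NeZero n] (hn : 5 ≤ n) (G : SimpleGraph (ZMod n))
    (hle : G ≤ squareCycle n) (htree : G.IsTree) :
    ∃ p d, Cand n G.edgeSet p d := by
  classical
  by_contra hno
  push_neg at hno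
  set E := G.edgeSet with hE
  set Q : ZMod n → ℕ → Prop :=
    fun p t => 1 ≤ t ∧ ((p + (t : ℕ)) ∈ Fset n E ∨ (p + (t : ℕ)) ∈ Wset n E) with hQ
  have hQn : ∀ p ∈ Wset n E, Q p n := by
    intro p hp
    refine ⟨by omega, Or.inr ?_⟩
    rwa [ZMod.natCast_self, add_zero]
  have hex : ∀ p ∈ Wset n E, ∃ t, Q p t := fun p hp => ⟨n, hQn p hp⟩
  set tf : ∀ p : ZMod n, p ∈ Wset n E → ℕ := fun p hp => Nat.find (hex p hp) with htf
  have htf1 : ∀ p hp, 1 ≤ tf p hp := fun p hp => (Nat.find_spec (hex p hp)).1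
  have htfn : ∀ p hp, tf p hp ≤ n := fun p hp => Nat.find_min' (hex p hp) (hQn p hp)
  have htfmin : ∀ p hp s, s < tf p hp → ¬ Q p s := fun p hp s hs => Nat.find_min (hex p hp) hs
  have hF : ∀ p hp, (p + ((tf p hp : ℕ) : ZMod n)) ∈ Fset n E := by
    intro p hp
    rcases (Nat.find_spec (hex p hp)).2 with h | h
    · exact h
    · by_contra hnF
      refine hno p (tf p hp) ⟨htf1 p hp, htfn p hp, mem_Wset.mp hp, mem_Wset.mp h, ?_⟩
      intro s hs1 hs2
      rcases Nat.lt_or_ge s (tf p hp) with hlt | hge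
      · exact fun hmem => htfmin p hp s hlt ⟨hs1, Or.inl (mem_Fset.mpr hmem)⟩
      · have hseq : s = tf p hp := le_antisymm hs2 hge
        rw [hseq]
        exact fun hmem => hnF (mem_Fset.mpr hmem)
  have hcard := count_lemma hn G hle htree
  rw [← hE] at hcard
  have hinj : ∀ p hp p' hp', p ≠ p' →
      (p + ((tf p hp : ℕ) : ZMod n)) = (p' + ((tf p' hp' : ℕ) : ZMod n)) → False := by
    intro p hp p' hp' hne heq
    set s : ℕ := (p' - p).val with hs
    have hscast : ((s : ℕ) : ZMod n) = p' - p := ZMod.natCast_zmod_val _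
    have hs1 : 1 ≤ s := by
      rcases Nat.eq_zero_or_pos s with h0 | h0
      · exfalso
        apply hne
        have hz : p' - p = 0 := by
          rw [← hscast, h0, Nat.cast_zero]
        linear_combination -hz
      · exact h0
    have hsn : s ≤ n - 1 := by
      have := ZMod.val_lt (p' - p)
      omega
    have hQs : Q p s := by
      refine ⟨hs1, Or.inr ?_⟩
      rw [show p + ((s : ℕ) : ZMod n) = p' by rw [hscast]; ring]
      exact hp'
    have hTles : tf p hp ≤ s := Nat.find_min' (hex p hp) hQs
    set T := tf p hp
    set T' := tf p' hp'
    have hT'1 : 1 ≤ T' := htf1 p' hp'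
    have hT'n : T' ≤ n := htfn p' hp'
    have hmod : (T : ZMod n) = ((s + T' : ℕ) : ZMod n) := by
      push_cast
      rw [hscast]
      linear_combination heq
    rw [ZMod.natCast_eq_natCast_iff] at hmod
    have hmod' : T % n = (s + T') % n := hmod
    rw [Nat.mod_eq_of_lt (by omega)] at hmod'
    rcases Nat.lt_or_ge (s + T') n with hlt | hge
    · rw [Nat.mod_eq_of_lt hlt] at hmod'
      omega
    · have hsub : (s + T') % n = s + T' - n := by
        rw [Nat.mod_eq_sub_mod hge, Nat.mod_eq_of_lt (by omega)]
      rw [hsub] at hmod'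
      have hQs' : Q p' (n - s) := by
        refine ⟨by omega, Or.inr ?_⟩
        rw [show p' + ((n - s : ℕ) : ZMod n) = p by
          push_cast [Nat.cast_sub (show s ≤ n by omega)]
          rw [ZMod.natCast_self, hscast]
          ring]
        exact hp
      have hcontra : T' ≤ n - s := Nat.find_min' (hex p' hp') hQs'
      have hT1 : 1 ≤ T := htf1 p hp
      clear_value T T' s
      omega
  set ψ : ZMod n → ZMod n := fun p =>
    if hp : p ∈ Wset n E then p + ((tf p hp : ℕ) : ZMod n) else 0 with hψ
  have hle' : (Wset n E).card ≤ (Fset n E).card := by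
    apply Finset.card_le_card_of_injOn ψ
    · intro p hp
      rw [Finset.mem_coe] at hp ⊢
      simp only [hψ, dif_pos hp]
      exact hF p hp
    · intro p hp p' hp' heq
      by_contra hne
      rw [Finset.mem_coe] at hp hp'
      rw [hψ] at heq
      simp only [dif_pos hp, dif_pos hp'] at heq
      exact hinj p hp p' hp' hne heq
  omega

lemma cand_not_even {n : ℕ} [NeZero n] (hn : 5 ≤ n) (G : SimpleGraph (ZMod n))
    (hle : G ≤ squareCycle n) (hconn : G.Connected)
    {p : ZMod n} {d : ℕ} (hc : Cand n G.edgeSet p d) (hd : d % 2 = 0) : False := by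
  obtain ⟨hd1, hdn, hw0, hwd, hfr⟩ := hc
  set S : Set (ZMod n) := {v | ∃ m : ℕ, (2 ≤ m ∧ m ≤ d ∧ m % 2 = 0) ∧ v = p + (m : ℕ)} with hS
  have hu0 : (p + ((2:ℕ):ZMod n)) ∈ S := ⟨2, ⟨le_refl 2, by omega, by omega⟩, rfl⟩
  have hv0 : (p + ((1:ℕ):ZMod n)) ∉ S := by
    rintro ⟨m, ⟨hm2, hmd, hme⟩, hm⟩
    have h1 : ((1:ℕ) : ZMod n) = (m : ZMod n) := by linear_combination hm
    rw [cast_eq_iff hn (by omega) (by omega)] at h1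
    omega
  have hcross : ∀ u v : ZMod n, u ∈ S → v ∉ S → ¬ G.Adj u v := by
    rintro u v ⟨m, ⟨hm2, hmd, hme⟩, rfl⟩ hv hadj
    have hedge : s(p + ((m:ℕ):ZMod n), v) ∈ G.edgeSet := G.mem_edgeSet.mpr hadj
    rcases (squareCycle_adj.mp (hle hadj)).2 with h | h | h | h
    · apply hfr m (by omega) hmd
      rw [show efr n (p + ((m:ℕ):ZMod n)) = s(p + ((m:ℕ):ZMod n), v) by rw [efr, h]]
      exact hedge
    · apply hfr (m-1) (by omega) (by omega)
      have hveq : v = p + (((m-1:ℕ)):ZMod n) := by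
        push_cast [Nat.cast_sub (show 1 ≤ m by omega)]
        linear_combination -h
      rw [show efr n (p + ((m-1:ℕ):ZMod n)) = s(p + ((m:ℕ):ZMod n), v) by
        rw [efr, ← hveq]
        have hu : p + ((m:ℕ):ZMod n) = v + 1 := by
          rw [hveq]
          push_cast [Nat.cast_sub (show 1 ≤ m by omega)]
          ring
        rw [hu, Sym2.eq_swap]]
      exact hedge
    · by_cases hm' : m + 2 ≤ d
      · exact hv ⟨m+2, ⟨by omega, hm', by omega⟩, by rw [h]; push_cast; ring⟩
      · have hmd' : m = d := by omega
        apply hwd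
        rw [show ewi n (p + ((d:ℕ):ZMod n)) = s(p + ((m:ℕ):ZMod n), v) by
          rw [ewi, h, hmd']]
        exact hedge
    · by_cases hm' : 4 ≤ m
      · refine hv ⟨m-2, ⟨by omega, by omega, by omega⟩, ?_⟩
        push_cast [Nat.cast_sub (show 2 ≤ m by omega)]
        linear_combination -h
      · have hm2' : m = 2 := by omega
        apply hw0
        have hveq : v = p := by
          have : (((2:ℕ)):ZMod n) = (2 : ZMod n) := by push_cast; ring
          rw [hm2', this] at h
          linear_combination -h
        rw [show ewi n p = s(p + ((m:ℕ):ZMod n), v) by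
          rw [ewi, ← hveq, hm2', show v + ((2:ℕ):ZMod n) = v + 2 by push_cast; ring,
            Sym2.eq_swap]]
        exact hedge
  obtain ⟨w⟩ := hconn.preconnected (p + ((2:ℕ):ZMod n)) (p + ((1:ℕ):ZMod n))
  obtain ⟨dart, _, h1, h2⟩ := w.exists_boundary_dart S hu0 hv0
  exact hcross _ _ h1 h2 dart.adj

lemma cand_disjoint {n : ℕ} [NeZero n] (hn : 5 ≤ n) (G : SimpleGraph (ZMod n))
    (hle : G ≤ squareCycle n) (hconn : G.Connected)
    {p : ZMod n} {d e g : ℕ} (hc1 : Cand n G.edgeSet p d)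
    (hc2 : Cand n G.edgeSet (p + ((d + g : ℕ) : ZMod n)) e)
    (hd : d % 2 = 1) (he : e % 2 = 1) (hsum : d + g + e ≤ n) : False := by
  obtain ⟨hd1, hdn, hw1, hw2, hfr1⟩ := hc1
  obtain ⟨he1, hen, hw3, hw4, hfr2⟩ := hc2
  set q : ZMod n := p + ((d + g : ℕ) : ZMod n) with hq
  have hfr2' : ∀ m' : ℕ, d+g+1 ≤ m' → m' ≤ d+g+e → efr n (p + ((m':ℕ):ZMod n)) ∉ G.edgeSet := by
    intro m' h1 h2
    have h3 := hfr2 (m' - (d+g)) (by omega) (by omega)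
    rw [show q + (((m'-(d+g)):ℕ):ZMod n) = p + ((m':ℕ):ZMod n) by
      rw [hq]; push_cast [Nat.cast_sub (show d+g ≤ m' by omega)]; ring] at h3
    exact h3
  have hwin : ∀ m' : ℕ, (m' = 0 ∨ m' = d ∨ m' = d + g ∨ m' = d+g+e) →
      ewi n (p + ((m':ℕ):ZMod n)) ∉ G.edgeSet := by
    rintro m' (rfl | rfl | rfl | rfl)
    · simpa using hw1
    · exact hw2
    · rw [show p + (((d+g:ℕ)):ZMod n) = q from rfl]
      exact hw3
    · rw [show p + (((d+g+e:ℕ)):ZMod n) = q + ((e:ℕ):ZMod n) by rw [hq]; push_cast; ring]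
      exact hw4
  set C : ℕ → Prop := fun m => 2 ≤ m ∧ m ≤ d+g+e ∧ (m ≤ d+1 → m % 2 = 0) ∧
      (d+g+1 ≤ m → (m - (d+g)) % 2 = 1) with hC
  set S : Set (ZMod n) := {v | ∃ m : ℕ, C m ∧ v = p + ((m:ℕ) : ZMod n)} with hS
  have hu0 : (p + ((2:ℕ):ZMod n)) ∈ S := ⟨2, by rw [hC]; omega, rfl⟩
  have hv0 : (p + ((1:ℕ):ZMod n)) ∉ S := by
    rintro ⟨m, hm, heq⟩
    rw [hC] at hm
    have h1 : ((1:ℕ) : ZMod n) = (m : ZMod n) := by linear_combination heq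
    rw [cast_eq_iff hn (by omega) (by omega)] at h1
    omega
  have hcross : ∀ u v : ZMod n, u ∈ S → v ∉ S → ¬ G.Adj u v := by
    rintro u v ⟨m, hm, rfl⟩ hv hadj
    rw [hC] at hm
    have hedge : s(p + ((m:ℕ):ZMod n), v) ∈ G.edgeSet := G.mem_edgeSet.mpr hadj
    rcases (squareCycle_adj.mp (hle hadj)).2 with h | h | h | h
    · -- v = u + 1
      by_cases hM : C (m+1)
      · exact hv ⟨m+1, hM, by rw [h]; push_cast; ring⟩
      · rw [hC] at hM
        have hor : (1 ≤ m ∧ m ≤ d) ∨ (d+g+1 ≤ m ∧ m ≤ d+g+e) := by omega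
        have hrw : efr n (p + ((m:ℕ):ZMod n)) = s(p + ((m:ℕ):ZMod n), v) := by rw [efr, h]
        rcases hor with ⟨h1, h2⟩ | ⟨h1, h2⟩
        · exact hfr1 m h1 h2 (by rw [hrw]; exact hedge)
        · exact hfr2' m h1 h2 (by rw [hrw]; exact hedge)
    · -- u = v + 1
      have hveq : v = p + (((m-1:ℕ)):ZMod n) := by
        push_cast [Nat.cast_sub (show 1 ≤ m by omega)]
        linear_combination -h
      by_cases hM : C (m-1)
      · exact hv ⟨m-1, hM, hveq⟩
      · rw [hC] at hM
        have hor : (1 ≤ m-1 ∧ m-1 ≤ d) ∨ (d+g+1 ≤ m-1 ∧ m-1 ≤ d+g+e) := by omega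
        have hrw : efr n (p + ((m-1:ℕ):ZMod n)) = s(p + ((m:ℕ):ZMod n), v) := by
          rw [efr, ← hveq, show p + ((m:ℕ):ZMod n) = v + 1 by
            rw [hveq]; push_cast [Nat.cast_sub (show 1 ≤ m by omega)]; ring, Sym2.eq_swap]
        rcases hor with ⟨h1, h2⟩ | ⟨h1, h2⟩
        · exact hfr1 (m-1) h1 h2 (by rw [hrw]; exact hedge)
        · exact hfr2' (m-1) h1 h2 (by rw [hrw]; exact hedge)
    · -- v = u + 2
      by_cases hM : C (m+2)
      · exact hv ⟨m+2, hM, by rw [h]; push_cast; ring⟩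
      · rw [hC] at hM
        have hor : m = d + g ∨ m = d+g+e := by omega
        apply hwin m (by omega)
        rw [show ewi n (p + ((m:ℕ):ZMod n)) = s(p + ((m:ℕ):ZMod n), v) by rw [ewi, h]]
        exact hedge
    · -- u = v + 2
      have hveq : v = p + (((m-2:ℕ)):ZMod n) := by
        push_cast [Nat.cast_sub (show 2 ≤ m by omega)]
        linear_combination -h
      by_cases hM : C (m-2)
      · exact hv ⟨m-2, hM, hveq⟩
      · rw [hC] at hM
        apply hwin (m-2) (by omega)
        rw [show ewi n (p + ((m-2:ℕ):ZMod n)) = s(p + ((m:ℕ):ZMod n), v) by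
          rw [ewi, ← hveq, show p + ((m:ℕ):ZMod n) = v + 2 by
            rw [hveq]; push_cast [Nat.cast_sub (show 2 ≤ m by omega)]; ring, Sym2.eq_swap]]
        exact hedge
  obtain ⟨w⟩ := hconn.preconnected (p + ((2:ℕ):ZMod n)) (p + ((1:ℕ):ZMod n))
  obtain ⟨dart, _, h1, h2⟩ := w.exists_boundary_dart S hu0 hv0
  exact hcross _ _ h1 h2 dart.adj

lemma cand_odd {n : ℕ} [NeZero n] (hn : 5 ≤ n) (G : SimpleGraph (ZMod n))
    (hle : G ≤ squareCycle n) (hconn : G.Connected)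
    {p : ZMod n} {d : ℕ} (hc : Cand n G.edgeSet p d) : d % 2 = 1 := by
  rcases Nat.mod_two_eq_zero_or_one d with h | h
  · exact absurd (cand_not_even hn G hle hconn hc h) (fun f => f)
  · exact h

lemma cand_split {n : ℕ} [NeZero n] {G : SimpleGraph (ZMod n)}
    {p : ZMod n} {d s : ℕ} (hc : Cand n G.edgeSet p d) (hs1 : 1 ≤ s) (hs2 : s ≤ d - 1)
    (hw : ewi n (p + ((s:ℕ):ZMod n)) ∉ G.edgeSet) :
    Cand n G.edgeSet p s ∧ Cand n G.edgeSet (p + ((s:ℕ):ZMod n)) (d - s) := by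
  obtain ⟨hd1, hdn, hw1, hw2, hfr⟩ := hc
  constructor
  · exact ⟨hs1, by omega, hw1, hw, fun t ht1 ht2 => hfr t ht1 (by omega)⟩
  · refine ⟨by omega, by omega, hw, ?_, ?_⟩
    · rw [show p + ((s:ℕ):ZMod n) + (((d-s:ℕ)):ZMod n) = p + ((d:ℕ):ZMod n) by
        push_cast [Nat.cast_sub (show s ≤ d by omega)]; ring]
      exact hw2
    · intro t ht1 ht2
      rw [show p + ((s:ℕ):ZMod n) + ((t:ℕ):ZMod n) = p + (((s+t:ℕ)):ZMod n) by
        push_cast; ring]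
      exact hfr (s+t) (by omega) (by omega)

lemma cand_clean {n : ℕ} [NeZero n] (hn : 5 ≤ n) (G : SimpleGraph (ZMod n))
    (hle : G ≤ squareCycle n) (hconn : G.Connected)
    {p : ZMod n} {d : ℕ} (hc : Cand n G.edgeSet p d) :
    ∀ s, 1 ≤ s → s ≤ d - 1 → ewi n (p + ((s:ℕ):ZMod n)) ∈ G.edgeSet := by
  intro s hs1 hs2
  by_contra hw
  obtain ⟨hcA, hcB⟩ := cand_split hc hs1 hs2 hw
  have hd := cand_odd hn G hle hconn hc
  rcases Nat.mod_two_eq_zero_or_one s with h | h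
  · exact cand_not_even hn G hle hconn hcA h
  · exact cand_not_even hn G hle hconn hcB (by omega)

lemma cand_unique {n : ℕ} [NeZero n] (hn : 5 ≤ n) (G : SimpleGraph (ZMod n))
    (hle : G ≤ squareCycle n) (hconn : G.Connected)
    {p q : ZMod n} {d e : ℕ} (hc1 : Cand n G.edgeSet p d) (hc2 : Cand n G.edgeSet q e) :
    p = q ∧ d = e := by
  have hd := cand_odd hn G hle hconn hc1
  have he := cand_odd hn G hle hconn hc2
  have hcl1 := cand_clean hn G hle hconn hc1
  have hcl2 := cand_clean hn G hle hconn hc2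
  set a : ℕ := (q - p).val with ha
  have hacast : ((a:ℕ) : ZMod n) = q - p := ZMod.natCast_zmod_val _
  have han : a < n := ZMod.val_lt _
  have hqp : q = p + ((a:ℕ) : ZMod n) := by rw [hacast]; ring
  have hd1 : 1 ≤ d := hc1.1
  have hdn : d ≤ n := hc1.2.1
  have he1 : 1 ≤ e := hc2.1
  have hen : e ≤ n := hc2.2.1
  have hpq : a = 0 → p = q := by
    intro h0
    rw [hqp, h0]
    push_cast
    ring
  rcases show a = 0 ∨ (1 ≤ a ∧ a ≤ d - 1) ∨ d ≤ a by omega with h0 | ⟨ha1, ha2⟩ | hda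
  · refine ⟨hpq h0, ?_⟩
    by_contra hne
    rcases Nat.lt_or_ge d e with hlt | hge
    · have := hcl2 d hd1 (by omega)
      rw [← hpq h0] at this
      exact hc1.2.2.2.1 this
    · have hlt : e < d := by omega
      have := hcl1 e he1 (by omega)
      rw [hpq h0] at this
      exact hc2.2.2.2.1 this
  · exfalso
    have := hcl1 a ha1 ha2
    rw [← hqp] at this
    exact hc2.2.2.1 this
  · exfalso
    rcases le_or_gt (a + e) n with hle' | hgt
    · refine cand_disjoint hn G hle hconn hc1 (g := a - d) (e := e) ?_ hd he (by omega)
      rw [show d + (a - d) = a by omega, ← hqp]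
      exact hc2
    · have hcl := hcl2 (n - a) (by omega) (by omega)
      rw [show q + (((n - a:ℕ)):ZMod n) = p by
        rw [hqp]
        push_cast [Nat.cast_sub (show a ≤ n by omega)]
        rw [ZMod.natCast_self]
        ring] at hcl
      exact hc1.2.2.1 hcl

lemma window_eq (n : ℕ) (i : ℤ) : window n i = ewi n ((i : ZMod n)) := by
  rw [window, ewi]
  push_cast
  rfl

lemma frame_eq (n : ℕ) (i : ℤ) : frame n i = efr n ((i : ZMod n)) := by
  rw [frame, efr]
  push_cast
  rfl

lemma cand_of_le_strip {n : ℕ} [NeZero n] (hn : 5 ≤ n) (G : SimpleGraph (ZMod n))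
    (j k : ℤ) (hk0 : 0 ≤ k) (hkn : 2*k+1 ≤ (n:ℤ))
    (hsub : G ≤ stripTails n k j) :
    Cand n G.edgeSet ((j : ZMod n)) (2*k.toNat+1) := by
  have hktn : (k.toNat : ℤ) = k := Int.toNat_of_nonneg hk0
  have hmiss : ∀ x ∈ escapeRoute n k j, x ∉ G.edgeSet := by
    intro x hx hxe
    induction x using Sym2.ind with
    | _ u v =>
      have hadj : G.Adj u v := hxe
      have h2 := hsub hadj
      rw [stripTails, SimpleGraph.deleteEdges_adj] at h2
      exact h2.2 hx
  refine ⟨by omega, by omega, ?_, ?_, ?_⟩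
  · have := hmiss (window n j) (Set.mem_union_left _ (Set.mem_insert _ _))
    rwa [window_eq] at this
  · have := hmiss (window n (j + 2*k + 1))
      (Set.mem_union_left _ (Set.mem_insert_of_mem _ rfl))
    rw [window_eq] at this
    rwa [show ((j + 2*k + 1 : ℤ) : ZMod n) = (j : ZMod n) + ((2*k.toNat+1 : ℕ) : ZMod n) by
      rw [show (j + 2*k + 1 : ℤ) = j + ((2*k.toNat+1 : ℕ) : ℤ) from by omega]
      push_cast
      ring] at this
  · intro s hs1 hs2
    have hm : frame n (j + s) ∈ escapeRoute n k j := by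
      refine Set.mem_union_right _ ⟨j + s, ⟨by omega, by omega⟩, rfl⟩
    have := hmiss _ hm
    rw [frame_eq] at this
    rwa [show ((j + (s:ℤ) : ℤ) : ZMod n) = (j : ZMod n) + ((s:ℕ) : ZMod n) by
      push_cast
      ring] at this

lemma le_strip_of_cand {n : ℕ} [NeZero n] (hn : 5 ≤ n) (G : SimpleGraph (ZMod n))
    (hle : G ≤ squareCycle n) (j k : ℤ) (hk0 : 0 ≤ k)
    (hc : Cand n G.edgeSet ((j : ZMod n)) (2*k.toNat+1)) :
    G ≤ stripTails n k j := by
  have hktn : (k.toNat : ℤ) = k := Int.toNat_of_nonneg hk0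
  intro u v huv
  rw [stripTails, SimpleGraph.deleteEdges_adj]
  refine ⟨hle huv, ?_⟩
  intro hx
  have hedge : s(u,v) ∈ G.edgeSet := G.mem_edgeSet.mpr huv
  rcases hx with hx | hx
  · rcases hx with hx | hx
    · rw [hx, window_eq] at hedge
      exact hc.2.2.1 hedge
    · rw [Set.mem_singleton_iff] at hx
      rw [hx, window_eq] at hedge
      rw [show ((j + 2*k + 1 : ℤ) : ZMod n) = (j : ZMod n) + ((2*k.toNat+1 : ℕ) : ZMod n) by
        rw [show (j + 2*k + 1 : ℤ) = j + ((2*k.toNat+1 : ℕ) : ℤ) from by omega]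
        push_cast
        ring] at hedge
      exact hc.2.2.2.1 hedge
  · obtain ⟨i, ⟨hi1, hi2⟩, hxi⟩ := hx
    set s : ℕ := (i - j).toNat with hsdef
    have hs : (s : ℤ) = i - j := Int.toNat_of_nonneg (by omega)
    apply hc.2.2.2.2 s (by omega) (by omega)
    rw [show (j : ZMod n) + ((s:ℕ):ZMod n) = ((i : ℤ) : ZMod n) by
      rw [show ((s:ℕ):ZMod n) = ((i - j : ℤ) : ZMod n) by rw [← hs]; push_cast; ring]
      push_cast
      ring]
    rw [← frame_eq, hxi]
    exact hedge


/-- Every spanning tree of `C_n^2` is contained in a unique strip graph with tails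
`S_{n,k,j}` with `0 ≤ j ≤ n - 1` and `0 ≤ k ≤ ⌈(n-2)/2⌉`. -/
theorem spanningTree_subset_unique_stripTails (n : ℕ) (hn : 5 ≤ n)
    (G : SimpleGraph (ZMod n)) (hle : G ≤ squareCycle n) (htree : G.IsTree) :
    ∃! jk : ℤ × ℤ,
      (0 ≤ jk.1 ∧ jk.1 ≤ (n : ℤ) - 1 ∧ 0 ≤ jk.2 ∧ jk.2 ≤ ⌈((n : ℚ) - 2) / 2⌉) ∧
        G ≤ stripTails n jk.2 jk.1 := by
  haveI : NeZero n := ⟨by omega⟩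
  have hconn := htree.isConnected
  have hceil : ⌈((n : ℚ) - 2) / 2⌉ = ((n : ℤ) - 1) / 2 := by
    set z : ℤ := ((n:ℤ) - 1) / 2 with hz
    have h1 : 2*z ≤ (n:ℤ) - 1 := by omega
    have h2 : (n:ℤ) - 2 ≤ 2*z := by omega
    rw [Int.ceil_eq_iff]
    constructor
    · rw [lt_div_iff₀ (by norm_num : (0:ℚ) < 2)]
      have h3 : ((2*z : ℤ) : ℚ) < ((n : ℤ) : ℚ) := by exact_mod_cast (by omega : 2*z < (n:ℤ))
      push_cast at h3 ⊢
      linarith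
    · rw [div_le_iff₀ (by norm_num : (0:ℚ) < 2)]
      have h3 : (((n:ℤ) - 2 : ℤ) : ℚ) ≤ ((2*z : ℤ) : ℚ) := by exact_mod_cast h2
      push_cast at h3 ⊢
      linarith
  obtain ⟨p, d, hcand⟩ := cand_exists hn G hle htree
  have hodd := cand_odd hn G hle hconn hcand
  have hd1 : 1 ≤ d := hcand.1
  have hdn : d ≤ n := hcand.2.1
  have hpval := ZMod.val_lt p
  set j : ℤ := (p.val : ℤ) with hjdef
  set k : ℤ := (((d - 1)/2 : ℕ) : ℤ) with hkdef
  have hjz : ((j : ℤ) : ZMod n) = p := by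
    rw [hjdef, Int.cast_natCast, ZMod.natCast_zmod_val]
  have hkt : 2*k.toNat + 1 = d := by omega
  refine ⟨(j, k), ⟨⟨?_, ?_, ?_, ?_⟩, ?_⟩, ?_⟩
  · exact Int.natCast_nonneg _
  · simp only [hjdef]
    omega
  · exact Int.natCast_nonneg _
  · rw [hceil]
    omega
  · refine le_strip_of_cand hn G hle j k (Int.natCast_nonneg _) ?_
    rw [hjz, hkt]
    exact hcand
  · rintro ⟨j', k'⟩ ⟨⟨hj'0, hj'n, hk'0, hk'c⟩, hsub'⟩
    rw [hceil] at hk'c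
    have hcand' := cand_of_le_strip hn G j' k' hk'0 (by omega) hsub'
    obtain ⟨hpq, hde⟩ := cand_unique hn G hle hconn hcand' hcand
    have hk'eq : k' = k := by omega
    have hj'eq : j' = j := by
      have h1 : ((j' : ℤ) : ZMod n) = ((j : ℤ) : ZMod n) := by rw [hpq, hjz]
      have e1 : ((j'.toNat : ℕ) : ZMod n) = ((j' : ℤ) : ZMod n) := by
        rw [← Int.cast_natCast, Int.toNat_of_nonneg hj'0]
      have e2 : ((j.toNat : ℕ) : ZMod n) = ((j : ℤ) : ZMod n) := by
        rw [← Int.cast_natCast, Int.toNat_of_nonneg (by omega : (0:ℤ) ≤ j)]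
      have h2 : ((j'.toNat : ℕ) : ZMod n) = ((j.toNat : ℕ) : ZMod n) :=
        e1.trans (h1.trans e2.symm)
      rw [cast_eq_iff hn (by omega) (by omega)] at h2
      omega
    rw [hj'eq, hk'eq]
end

section
/- Let n ≥ 5 be an integer and let G be a nontrivial connected spanning convex subgraph of the square cycle C_n^2. If the edge set of G contains at least one frame, then there exist integers j, k with 0 ≤ j ≤ n-1 and 0 ≤ k ≤ ⌊(n-2)/2⌋ such that G = S_{n,k,j}. -/
open SimpleGraph

namespace SqCProof

variable {n : ℕ} {G : SimpleGraph (ZMod n)}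

/-- Frame indicator: the frame at `u` is an edge of `G`. -/
def Fr (G : SimpleGraph (ZMod n)) (u : ZMod n) : Prop := G.Adj u (u + 1)

/-- Window indicator: the window at `u` is an edge of `G`. -/
def Wi (G : SimpleGraph (ZMod n)) (u : ZMod n) : Prop := G.Adj u (u + 2)

lemma frame_eq' (n : ℕ) (i : ℤ) : frame n i = s((i : ZMod n), (i : ZMod n) + 1) := by
  unfold frame; push_cast; rfl

lemma window_eq' (n : ℕ) (i : ℤ) : window n i = s((i : ZMod n), (i : ZMod n) + 2) := by
  unfold window; push_cast; rfl

lemma cnz (hn : 5 ≤ n) {c : ℕ} (h1 : c ≠ 0) (h2 : c ≤ 4) : ((c : ℕ) : ZMod n) ≠ 0 := by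
  haveI : NeZero n := ⟨by omega⟩
  rw [Ne, ZMod.natCast_eq_zero_iff]
  intro h
  have := Nat.le_of_dvd (by omega) h
  omega

lemma one_nz (hn : 5 ≤ n) : (1 : ZMod n) ≠ 0 := by
  have := cnz hn (c := 1) (by norm_num) (by norm_num); simpa using this

lemma two_nz (hn : 5 ≤ n) : (2 : ZMod n) ≠ 0 := by
  have := cnz hn (c := 2) (by norm_num) (by norm_num); simpa using this

lemma three_nz (hn : 5 ≤ n) : (3 : ZMod n) ≠ 0 := by
  have := cnz hn (c := 3) (by norm_num) (by norm_num); simpa using this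

lemma four_nz (hn : 5 ≤ n) : (4 : ZMod n) ≠ 0 := by
  have := cnz hn (c := 4) (by norm_num) (by norm_num); simpa using this

lemma frame_eq_frame (hn : 5 ≤ n) {u v : ZMod n} : s(u, u + 1) = s(v, v + 1) ↔ u = v := by
  rw [Sym2.eq_iff]
  constructor
  · rintro (⟨h1, -⟩ | ⟨h1, h2⟩)
    · exact h1
    · exact absurd (show (2 : ZMod n) = 0 by linear_combination h2 - h1) (two_nz hn)
  · rintro rfl; exact Or.inl ⟨rfl, rfl⟩

lemma window_eq_window (hn : 5 ≤ n) {u v : ZMod n} : s(u, u + 2) = s(v, v + 2) ↔ u = v := by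
  rw [Sym2.eq_iff]
  constructor
  · rintro (⟨h1, -⟩ | ⟨h1, h2⟩)
    · exact h1
    · exact absurd (show (4 : ZMod n) = 0 by linear_combination h2 - h1) (four_nz hn)
  · rintro rfl; exact Or.inl ⟨rfl, rfl⟩

lemma frame_ne_window (hn : 5 ≤ n) (u v : ZMod n) : s(u, u + 1) ≠ s(v, v + 2) := by
  intro hq
  rw [Sym2.eq_iff] at hq
  rcases hq with ⟨h1, h2⟩ | ⟨h1, h2⟩
  · exact absurd (show (1 : ZMod n) = 0 by linear_combination h1 - h2) (one_nz hn)
  · exact absurd (show (3 : ZMod n) = 0 by linear_combination h2 - h1) (three_nz hn)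

lemma sq_adj_frame (hn : 5 ≤ n) (u : ZMod n) : (squareCycle n).Adj u (u + 1) := by
  unfold squareCycle
  rw [SimpleGraph.fromRel_adj]
  exact ⟨fun h => one_nz hn (by linear_combination -h), Or.inr (Or.inl (by ring))⟩

lemma sq_adj_window (hn : 5 ≤ n) (u : ZMod n) : (squareCycle n).Adj u (u + 2) := by
  unfold squareCycle
  rw [SimpleGraph.fromRel_adj]
  exact ⟨fun h => two_nz hn (by linear_combination -h), Or.inr (Or.inr (by ring))⟩

lemma adj_cases (hn : 5 ≤ n) {H : SimpleGraph (ZMod n)} (hle : H ≤ squareCycle n)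
    {u v : ZMod n} (h : H.Adj u v) :
    (v = u + 1 ∧ H.Adj u (u + 1)) ∨ (u = v + 1 ∧ H.Adj v (v + 1)) ∨
      (v = u + 2 ∧ H.Adj u (u + 2)) ∨ (u = v + 2 ∧ H.Adj v (v + 2)) := by
  have h2 := hle h
  unfold squareCycle at h2
  rw [SimpleGraph.fromRel_adj] at h2
  obtain ⟨-, h2⟩ := h2
  rcases h2 with (h3 | h3) | (h3 | h3)
  · have hu : u = v + 1 := by linear_combination h3
    refine Or.inr (Or.inl ⟨hu, ?_⟩)
    rw [hu] at h; exact h.symm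
  · have hu : u = v + 2 := by linear_combination h3
    refine Or.inr (Or.inr (Or.inr ⟨hu, ?_⟩))
    rw [hu] at h; exact h.symm
  · have hv : v = u + 1 := by linear_combination h3
    refine Or.inl ⟨hv, ?_⟩
    rw [hv] at h; exact h
  · have hv : v = u + 2 := by linear_combination h3
    refine Or.inr (Or.inr (Or.inl ⟨hv, ?_⟩))
    rw [hv] at h; exact h

lemma walk_mem {V : Type*} {H : SimpleGraph V} {S : Set V}
    (hS : ∀ ⦃x y : V⦄, H.Adj x y → x ∈ S → y ∈ S) :
    ∀ {u v : V}, H.Walk u v → u ∈ S → v ∈ S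
  | _, _, SimpleGraph.Walk.nil, hu => hu
  | _, _, SimpleGraph.Walk.cons h p, hu => walk_mem hS p (hS h hu)

lemma conv_rules (hn : 5 ≤ n) (hconv : IsConvex n G) (u : ZMod n) :
    (Fr G u → Fr G (u + 1) → Wi G u) ∧ (Fr G u → Wi G u → Fr G (u + 1)) ∧
      (Wi G u → Fr G (u + 1) → Fr G u) := by
  haveI : NeZero n := ⟨by omega⟩
  set i : ℤ := (u.val : ℤ) with hidef
  have hiu : ((i : ℤ) : ZMod n) = u := by
    rw [hidef, Int.cast_natCast, ZMod.natCast_val, ZMod.cast_id]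
  have c1 : ((i + 1 : ℤ) : ZMod n) = u + 1 := by rw [Int.cast_add, hiu, Int.cast_one]
  have e1 : frame n i = s(u, u + 1) := by rw [frame_eq', hiu]
  have e2 : frame n (i + 1) = s(u + 1, (u + 1) + 1) := by rw [frame_eq', c1]
  have e3 : window n i = s(u, u + 2) := by rw [window_eq', hiu]
  have m1 : frame n i ∈ triangle n i := by unfold triangle; exact Set.mem_insert _ _
  have m2 : frame n (i + 1) ∈ triangle n i := by
    unfold triangle; exact Set.mem_insert_of_mem _ (Set.mem_insert _ _)
  have m3 : window n i ∈ triangle n i := by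
    unfold triangle; exact Set.mem_insert_of_mem _ (Set.mem_insert_of_mem _ rfl)
  have d12 : frame n i ≠ frame n (i + 1) := by
    rw [e1, e2]
    intro hq
    have h := (frame_eq_frame hn).mp hq
    exact one_nz hn (by linear_combination -h)
  have d13 : frame n i ≠ window n i := by rw [e1, e3]; exact frame_ne_window hn u u
  have d23 : frame n (i + 1) ≠ window n i := by rw [e2, e3]; exact frame_ne_window hn (u + 1) u
  have key : ∀ {x y : Sym2 (ZMod n)}, x ∈ triangle n i → y ∈ triangle n i → x ≠ y →
      x ∈ G.edgeSet → y ∈ G.edgeSet → triangle n i ⊆ G.edgeSet := by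
    intro x y hx hy hxy hx' hy'
    rcases hconv i with hc | hc
    · exfalso
      have hfin : (triangle n i ∩ G.edgeSet).Finite := by
        apply Set.Finite.inter_of_left
        unfold triangle
        exact ((Set.finite_singleton _).insert _).insert _
      have hsubxy : ({x, y} : Set (Sym2 (ZMod n))) ⊆ triangle n i ∩ G.edgeSet := by
        rintro z hz
        simp only [Set.mem_insert_iff, Set.mem_singleton_iff] at hz
        rcases hz with rfl | rfl
        · exact ⟨hx, hx'⟩
        · exact ⟨hy, hy'⟩
      have h2 : 2 ≤ (triangle n i ∩ G.edgeSet).ncard := by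
        have := Set.ncard_le_ncard hsubxy hfin
        rwa [Set.ncard_pair hxy] at this
      omega
    · exact hc
  refine ⟨?_, ?_, ?_⟩
  · intro h1 h2
    have hsub := key m1 m2 d12 (by rw [e1, SimpleGraph.mem_edgeSet]; exact h1)
      (by rw [e2, SimpleGraph.mem_edgeSet]; exact h2)
    have h3 := hsub m3
    rw [e3, SimpleGraph.mem_edgeSet] at h3
    exact h3
  · intro h1 h3
    have hsub := key m1 m3 d13 (by rw [e1, SimpleGraph.mem_edgeSet]; exact h1)
      (by rw [e3, SimpleGraph.mem_edgeSet]; exact h3)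
    have h2 := hsub m2
    rw [e2, SimpleGraph.mem_edgeSet] at h2
    exact h2
  · intro h3 h2
    have hsub := key m2 m3 d23 (by rw [e2, SimpleGraph.mem_edgeSet]; exact h2)
      (by rw [e3, SimpleGraph.mem_edgeSet]; exact h3)
    have h1 := hsub m1
    rw [e1, SimpleGraph.mem_edgeSet] at h1
    exact h1

/-- Gap data: a maximal run of `L` missing frames starting right after `a`. -/
structure GapData (n : ℕ) (G : SimpleGraph (ZMod n)) (a : ZMod n) (L : ℕ) : Prop where
  hFa : Fr G a
  pos : 1 ≤ L
  len : L ≤ n - 1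
  absent : ∀ t : ℕ, 1 ≤ t → t ≤ L → ¬ Fr G (a + (t : ZMod n))
  top : Fr G (a + ((L + 1 : ℕ) : ZMod n))
  wbot : ¬ Wi G a
  wtop : ¬ Wi G (a + ((L : ℕ) : ZMod n))

lemma gap_make (hn : 5 ≤ n)
    (hcr : ∀ u : ZMod n, (Fr G u → Fr G (u + 1) → Wi G u) ∧ (Fr G u → Wi G u → Fr G (u + 1)) ∧
      (Wi G u → Fr G (u + 1) → Fr G u))
    (a : ZMod n) (hFa : Fr G a) (h1 : ¬ Fr G (a + 1)) : ∃ L : ℕ, GapData n G a L := by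
  haveI : NeZero n := ⟨by omega⟩
  classical
  have hwit : Fr G (a + ((n - 1 + 1 : ℕ) : ZMod n)) := by
    rw [Nat.sub_add_cancel (by omega : 1 ≤ n), ZMod.natCast_self, add_zero]
    exact hFa
  have hex : ∃ ℓ : ℕ, Fr G (a + ((ℓ + 1 : ℕ) : ZMod n)) := ⟨n - 1, hwit⟩
  set L := Nat.find hex with hLdef
  have hspec : Fr G (a + ((L + 1 : ℕ) : ZMod n)) := Nat.find_spec hex
  have hmin : ∀ m, m < L → ¬ Fr G (a + ((m + 1 : ℕ) : ZMod n)) := fun m hm => Nat.find_min hex hm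
  have hpos : 1 ≤ L := by
    rcases Nat.eq_zero_or_pos L with h0 | h0
    · exfalso
      apply h1
      have hsp := hspec
      rw [h0] at hsp
      simpa using hsp
    · exact h0
  have hlen : L ≤ n - 1 := Nat.find_le hwit
  have habs : ∀ t : ℕ, 1 ≤ t → t ≤ L → ¬ Fr G (a + (t : ZMod n)) := by
    intro t h1t h2t
    have := hmin (t - 1) (by omega)
    rwa [show t - 1 + 1 = t by omega] at this
  have hwbot : ¬ Wi G a := fun hW => h1 ((hcr a).2.1 hFa hW)
  have hwtop : ¬ Wi G (a + ((L : ℕ) : ZMod n)) := by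
    intro hW
    have htop' : Fr G ((a + ((L : ℕ) : ZMod n)) + 1) := by
      have e : (a + ((L : ℕ) : ZMod n)) + 1 = a + ((L + 1 : ℕ) : ZMod n) := by push_cast; ring
      rw [e]; exact hspec
    exact habs L hpos le_rfl ((hcr _).2.2 hW htop')
  exact ⟨L, ⟨hFa, hpos, hlen, habs, hspec, hwbot, hwtop⟩⟩

lemma cut_contra (hn : 5 ≤ n) (hle : G ≤ squareCycle n) (hconn : G.Connected)
    (a : ZMod n) (T : ℕ → Prop)
    (hsub : ∀ s, T s → 2 ≤ s ∧ s ≤ n - 1)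
    (hne : ∃ s, T s)
    (hFup : ∀ s, T s → Fr G (a + (s : ZMod n)) → T (s + 1))
    (hFdown : ∀ s, T s → Fr G (a + ((s - 1 : ℕ) : ZMod n)) → T (s - 1))
    (hWup : ∀ s, T s → Wi G (a + (s : ZMod n)) → T (s + 2))
    (hWdown : ∀ s, T s → Wi G (a + ((s - 2 : ℕ) : ZMod n)) → T (s - 2)) : False := by
  haveI : NeZero n := ⟨by omega⟩
  obtain ⟨s0, hs0⟩ := hne
  have hclosed : ∀ ⦃x y : ZMod n⦄, G.Adj x y →
      x ∈ {x : ZMod n | ∃ s : ℕ, T s ∧ x = a + (s : ZMod n)} →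
      y ∈ {x : ZMod n | ∃ s : ℕ, T s ∧ x = a + (s : ZMod n)} := by
    rintro x y hadj ⟨s, hTs, rfl⟩
    obtain ⟨hs2, hsn⟩ := hsub s hTs
    rcases adj_cases hn hle hadj with ⟨hv, hA⟩ | ⟨hv, hA⟩ | ⟨hv, hA⟩ | ⟨hv, hA⟩
    · exact ⟨s + 1, hFup s hTs hA, by rw [hv]; push_cast; ring⟩
    · have hsub1 : ((s - 1 : ℕ) : ZMod n) = (s : ZMod n) - 1 := by
        rw [Nat.cast_sub (by omega : 1 ≤ s), Nat.cast_one]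
      have hy : y = a + ((s - 1 : ℕ) : ZMod n) := by rw [hsub1]; linear_combination -hv
      exact ⟨s - 1, hFdown s hTs (by rw [← hy]; exact hA), hy⟩
    · exact ⟨s + 2, hWup s hTs hA, by rw [hv]; push_cast; ring⟩
    · have hsub2 : ((s - 2 : ℕ) : ZMod n) = (s : ZMod n) - 2 := by
        rw [Nat.cast_sub (by omega : 2 ≤ s)]; norm_num
      have hy : y = a + ((s - 2 : ℕ) : ZMod n) := by rw [hsub2]; linear_combination -hv
      exact ⟨s - 2, hWdown s hTs (by rw [← hy]; exact hA), hy⟩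
  have haS : a ∉ {x : ZMod n | ∃ s : ℕ, T s ∧ x = a + (s : ZMod n)} := by
    rintro ⟨s, hTs, hEq⟩
    obtain ⟨hs2, hsn⟩ := hsub s hTs
    have h0 : ((s : ℕ) : ZMod n) = 0 := left_eq_add.mp hEq
    rw [ZMod.natCast_eq_zero_iff] at h0
    have := Nat.le_of_dvd (by omega) h0
    omega
  exact haS (walk_mem hclosed (hconn.preconnected (a + (s0 : ZMod n)) a).some ⟨s0, hs0, rfl⟩)

lemma gap_odd (hn : 5 ≤ n) (hle : G ≤ squareCycle n) (hconn : G.Connected)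
    {a : ZMod n} {L : ℕ} (gd : GapData n G a L) : Odd L := by
  rcases Nat.even_or_odd L with hE | hO
  · exfalso
    obtain ⟨r, hr⟩ := hE
    have hpos := gd.pos
    have hlen := gd.len
    have hL2 : 2 ≤ L := by omega
    refine cut_contra hn hle hconn a (fun s => 2 ≤ s ∧ s ≤ L ∧ s % 2 = 0)
      (fun s hs => ⟨hs.1, by omega⟩) ⟨2, by omega⟩ ?_ ?_ ?_ ?_
    · intro s hs hF; exact (gd.absent s (by omega) (by omega) hF).elim
    · intro s hs hF; exact (gd.absent (s - 1) (by omega) (by omega) hF).elim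
    · intro s hs hw
      by_cases hsl : s = L
      · rw [hsl] at hw; exact (gd.wtop hw).elim
      · exact ⟨by omega, by omega, by omega⟩
    · intro s hs hw
      by_cases hs2 : s = 2
      · rw [hs2] at hw; norm_num at hw; exact (gd.wbot hw).elim
      · exact ⟨by omega, by omega, by omega⟩
  · exact hO

lemma gap_windows (hn : 5 ≤ n) (hle : G ≤ squareCycle n) (hconn : G.Connected)
    {a : ZMod n} {L : ℕ} (gd : GapData n G a L) :
    ∀ t : ℕ, 1 ≤ t → t ≤ L - 1 → Wi G (a + (t : ZMod n)) := by
  intro t h1t h2t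
  by_contra hW
  obtain ⟨kk, hkk⟩ := gap_odd hn hle hconn gd
  have hlen := gd.len
  have hpos := gd.pos
  rcases Nat.even_or_odd t with hTe | hTo
  · obtain ⟨r, hr⟩ := hTe
    refine cut_contra hn hle hconn a (fun s => 2 ≤ s ∧ s ≤ t ∧ s % 2 = 0)
      (fun s hs => ⟨hs.1, by omega⟩) ⟨2, by omega⟩ ?_ ?_ ?_ ?_
    · intro s hs hF; exact (gd.absent s (by omega) (by omega) hF).elim
    · intro s hs hF; exact (gd.absent (s - 1) (by omega) (by omega) hF).elim
    · intro s hs hw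
      by_cases hst : s = t
      · rw [hst] at hw; exact (hW hw).elim
      · exact ⟨by omega, by omega, by omega⟩
    · intro s hs hw
      by_cases hs2 : s = 2
      · rw [hs2] at hw; norm_num at hw; exact (gd.wbot hw).elim
      · exact ⟨by omega, by omega, by omega⟩
  · obtain ⟨r, hr⟩ := hTo
    refine cut_contra hn hle hconn a (fun s => t + 2 ≤ s ∧ s ≤ L ∧ s % 2 = 1)
      (fun s hs => ⟨by omega, by omega⟩) ⟨t + 2, by omega⟩ ?_ ?_ ?_ ?_
    · intro s hs hF; exact (gd.absent s (by omega) (by omega) hF).elim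
    · intro s hs hF; exact (gd.absent (s - 1) (by omega) (by omega) hF).elim
    · intro s hs hw
      by_cases hsl : s = L
      · rw [hsl] at hw; exact (gd.wtop hw).elim
      · exact ⟨by omega, by omega, by omega⟩
    · intro s hs hw
      by_cases hst : s = t + 2
      · rw [hst, Nat.add_sub_cancel] at hw; exact (hW hw).elim
      · exact ⟨by omega, by omega, by omega⟩

lemma gap_all (hn : 5 ≤ n) (hle : G ≤ squareCycle n) (hconn : G.Connected)
    (hcr : ∀ u : ZMod n, (Fr G u → Fr G (u + 1) → Wi G u) ∧ (Fr G u → Wi G u → Fr G (u + 1)) ∧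
      (Wi G u → Fr G (u + 1) → Fr G u))
    {a : ZMod n} {L : ℕ} (gd : GapData n G a L) :
    ∀ t : ℕ, L + 1 ≤ t → t ≤ n - 1 → Fr G (a + (t : ZMod n)) := by
  classical
  by_contra hbad
  push_neg at hbad
  obtain ⟨t0, ht1, ht2, ht3⟩ := hbad
  have hex : ∃ t : ℕ, L + 1 ≤ t ∧ t ≤ n - 1 ∧ ¬ Fr G (a + (t : ZMod n)) := ⟨t0, ht1, ht2, ht3⟩
  set m1 := Nat.find hex with hm1def
  obtain ⟨hm1a, hm1b, hm1c⟩ := Nat.find_spec hex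
  rw [← hm1def] at hm1a hm1b hm1c
  have hmin : ∀ t : ℕ, L + 1 ≤ t → t ≤ n - 1 → t < m1 → Fr G (a + (t : ZMod n)) := by
    intro t h1 h2 h3
    by_contra h4
    exact Nat.find_min hex h3 ⟨h1, h2, h4⟩
  have hm1L : L + 2 ≤ m1 := by
    rcases Nat.lt_or_ge m1 (L + 2) with h | h
    · exfalso
      apply hm1c
      rw [show m1 = L + 1 by omega]
      exact gd.top
    · exact h
  set m := m1 - 1 with hmdef
  have hmL : L + 1 ≤ m := by omega
  have hmn : m ≤ n - 2 := by omega
  have hFm : Fr G (a + (m : ZMod n)) := hmin m (by omega) (by omega) (by omega)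
  have hnFm1 : ¬ Fr G (a + ((m + 1 : ℕ) : ZMod n)) := by
    rw [show m + 1 = m1 by omega]; exact hm1c
  have h1' : ¬ Fr G ((a + (m : ZMod n)) + 1) := by
    rw [show (a + (m : ZMod n)) + 1 = a + ((m + 1 : ℕ) : ZMod n) by push_cast; ring]
    exact hnFm1
  obtain ⟨L2, gd2⟩ := gap_make hn hcr _ hFm h1'
  obtain ⟨k2, hk2⟩ := gap_odd hn hle hconn gd2
  obtain ⟨kk, hkk⟩ := gap_odd hn hle hconn gd
  have hL2pos := gd2.pos
  have hlen := gd.len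
  have hpos := gd.pos
  have hbound : m + L2 ≤ n - 1 := by
    by_contra hB
    apply gd2.absent (n - m) (by omega) (by omega)
    rw [show (a + (m : ZMod n)) + ((n - m : ℕ) : ZMod n) = a by
      rw [add_assoc, ← Nat.cast_add, show m + (n - m) = n by omega, ZMod.natCast_self, add_zero]]
    exact gd.hFa
  have fab2 : ∀ s : ℕ, m + 1 ≤ s → s ≤ m + L2 → ¬ Fr G (a + (s : ZMod n)) := by
    intro s h1 h2 hF
    apply gd2.absent (s - m) (by omega) (by omega)
    rw [show (a + (m : ZMod n)) + ((s - m : ℕ) : ZMod n) = a + (s : ZMod n) by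
      rw [add_assoc, ← Nat.cast_add, show m + (s - m) = s by omega]]
    exact hF
  have fwm : ¬ Wi G (a + (m : ZMod n)) := gd2.wbot
  have fwmL : ¬ Wi G (a + ((m + L2 : ℕ) : ZMod n)) := by
    rw [show (a + ((m + L2 : ℕ) : ZMod n)) = (a + (m : ZMod n)) + ((L2 : ℕ) : ZMod n) by
      push_cast; ring]
    exact gd2.wtop
  refine cut_contra hn hle hconn a
    (fun s => (2 ≤ s ∧ s ≤ L - 1 ∧ s % 2 = 0) ∨ (L + 1 ≤ s ∧ s ≤ m + 1) ∨
      (m + 3 ≤ s ∧ s ≤ m + L2 ∧ s % 2 = (m + 1) % 2)) ?_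
    ⟨L + 1, Or.inr (Or.inl ⟨le_rfl, by omega⟩)⟩ ?_ ?_ ?_ ?_
  · rintro s (⟨h1, h2, h3⟩ | ⟨h1, h2⟩ | ⟨h1, h2, h3⟩) <;> exact ⟨by omega, by omega⟩
  · rintro s (⟨h1, h2, h3⟩ | ⟨h1, h2⟩ | ⟨h1, h2, h3⟩) hF
    · exact (gd.absent s (by omega) (by omega) hF).elim
    · by_cases hc : s ≤ m
      · exact Or.inr (Or.inl ⟨by omega, by omega⟩)
      · exact (fab2 s (by omega) (by omega) hF).elim
    · exact (fab2 s (by omega) (by omega) hF).elim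
  · rintro s (⟨h1, h2, h3⟩ | ⟨h1, h2⟩ | ⟨h1, h2, h3⟩) hF
    · exact (gd.absent (s - 1) (by omega) (by omega) hF).elim
    · by_cases hc : s = L + 1
      · exact (gd.absent (s - 1) (by omega) (by omega) hF).elim
      · exact Or.inr (Or.inl ⟨by omega, by omega⟩)
    · exact (fab2 (s - 1) (by omega) (by omega) hF).elim
  · rintro s (⟨h1, h2, h3⟩ | ⟨h1, h2⟩ | ⟨h1, h2, h3⟩) hw
    · by_cases hc : s + 2 ≤ L - 1
      · exact Or.inl ⟨by omega, by omega, by omega⟩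
      · exact Or.inr (Or.inl ⟨by omega, by omega⟩)
    · by_cases hc : s ≤ m - 1
      · exact Or.inr (Or.inl ⟨by omega, by omega⟩)
      · by_cases hcm : s = m
        · rw [hcm] at hw; exact (fwm hw).elim
        · by_cases hL21 : L2 = 1
          · rw [show s = m + L2 by omega] at hw; exact (fwmL hw).elim
          · exact Or.inr (Or.inr ⟨by omega, by omega, by omega⟩)
    · by_cases hc : s = m + L2
      · rw [hc] at hw; exact (fwmL hw).elim
      · exact Or.inr (Or.inr ⟨by omega, by omega, by omega⟩)
  · rintro s (⟨h1, h2, h3⟩ | ⟨h1, h2⟩ | ⟨h1, h2, h3⟩) hw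
    · by_cases hs2 : s = 2
      · rw [hs2] at hw; norm_num at hw; exact (gd.wbot hw).elim
      · exact Or.inl ⟨by omega, by omega, by omega⟩
    · by_cases hc1 : s = L + 1
      · by_cases hL1 : L = 1
        · rw [show s - 2 = 0 by omega] at hw; norm_num at hw; exact (gd.wbot hw).elim
        · exact Or.inl ⟨by omega, by omega, by omega⟩
      · by_cases hc2 : s = L + 2
        · rw [show s - 2 = L by omega] at hw; exact (gd.wtop hw).elim
        · exact Or.inr (Or.inl ⟨by omega, by omega⟩)
    · by_cases hc : s = m + 3
      · exact Or.inr (Or.inl ⟨by omega, by omega⟩)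
      · exact Or.inr (Or.inr ⟨by omega, by omega, by omega⟩)

lemma cast_nat_inj (hn : 5 ≤ n) {s t : ℕ} (hs : s < n) (ht : t < n) :
    ((s : ZMod n) = (t : ZMod n)) ↔ s = t := by
  haveI : NeZero n := ⟨by omega⟩
  constructor
  · intro h
    have h2 := congrArg ZMod.val h
    rwa [ZMod.val_cast_of_lt hs, ZMod.val_cast_of_lt ht] at h2
  · rintro rfl; rfl

lemma int_window (hn : 5 ≤ n) {a : ZMod n} {jz : ℤ} (hja : ((jz : ℤ) : ZMod n) = a)
    {L s : ℕ} (hL : L ≤ n - 1) (hs : s ≤ n - 1) :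
    (∃ i : ℤ, jz + 1 ≤ i ∧ i ≤ jz + (L : ℤ) ∧ ((i : ℤ) : ZMod n) = a + (s : ZMod n)) ↔
      (1 ≤ s ∧ s ≤ L) := by
  haveI : NeZero n := ⟨by omega⟩
  constructor
  · rintro ⟨i, h1, h2, h3⟩
    have h4 : ((i - jz - (s : ℤ) : ℤ) : ZMod n) = 0 := by
      rw [Int.cast_sub, Int.cast_sub, h3, hja, Int.cast_natCast]
      ring
    rw [ZMod.intCast_zmod_eq_zero_iff_dvd] at h4
    obtain ⟨c, hc⟩ := h4
    have hsz : (s : ℤ) ≤ (n : ℤ) - 1 := by omega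
    have hLz : (L : ℤ) ≤ (n : ℤ) - 1 := by omega
    have hnz : (5 : ℤ) ≤ (n : ℤ) := by omega
    have hspos : (0 : ℤ) ≤ (s : ℤ) := by positivity
    have hc0 : c = 0 := by
      rcases lt_trichotomy c 0 with h | h | h
      · exfalso
        have hmul : (n : ℤ) * c ≤ (n : ℤ) * (-1) :=
          mul_le_mul_of_nonneg_left (by omega) (by omega)
        rw [mul_neg_one] at hmul
        linarith
      · exact h
      · exfalso
        have hmul : (n : ℤ) * 1 ≤ (n : ℤ) * c :=
          mul_le_mul_of_nonneg_left (by omega) (by omega)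
        rw [mul_one] at hmul
        linarith
    rw [hc0, mul_zero] at hc
    omega
  · rintro ⟨h1, h2⟩
    refine ⟨jz + (s : ℤ), by omega, by omega, ?_⟩
    rw [Int.cast_add, hja, Int.cast_natCast]

lemma frame_mem_escape (hn : 5 ≤ n) (kz jz : ℤ) (u : ZMod n) :
    s(u, u + 1) ∈ escapeRoute n kz jz ↔
      ∃ i : ℤ, jz + 1 ≤ i ∧ i ≤ jz + 2 * kz + 1 ∧ ((i : ℤ) : ZMod n) = u := by
  unfold escapeRoute
  rw [Set.mem_union]
  constructor
  · rintro (h | h)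
    · exfalso
      simp only [Set.mem_insert_iff, Set.mem_singleton_iff] at h
      rcases h with h | h
      · rw [window_eq'] at h; exact frame_ne_window hn u _ h
      · rw [window_eq'] at h; exact frame_ne_window hn u _ h
    · obtain ⟨i, hi, hEq⟩ := h
      rw [frame_eq'] at hEq
      exact ⟨i, hi.1, hi.2, (frame_eq_frame hn).mp hEq⟩
  · rintro ⟨i, h1, h2, h3⟩
    right
    exact ⟨i, ⟨h1, h2⟩, by rw [frame_eq', h3]⟩

lemma window_mem_escape (hn : 5 ≤ n) (kz jz : ℤ) (u : ZMod n) :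
    s(u, u + 2) ∈ escapeRoute n kz jz ↔
      (u = ((jz : ℤ) : ZMod n) ∨ u = ((jz + 2 * kz + 1 : ℤ) : ZMod n)) := by
  unfold escapeRoute
  rw [Set.mem_union]
  constructor
  · rintro (h | h)
    · simp only [Set.mem_insert_iff, Set.mem_singleton_iff] at h
      rcases h with h | h
      · rw [window_eq'] at h; exact Or.inl ((window_eq_window hn).mp h)
      · rw [window_eq'] at h; exact Or.inr ((window_eq_window hn).mp h)
    · exfalso
      obtain ⟨i, -, hEq⟩ := h
      rw [frame_eq'] at hEq
      exact frame_ne_window hn _ _ hEq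
  · rintro (h | h)
    · left
      simp only [Set.mem_insert_iff, Set.mem_singleton_iff]
      left
      rw [window_eq', h]
    · left
      simp only [Set.mem_insert_iff, Set.mem_singleton_iff]
      right
      rw [window_eq', h]

end SqCProof

/-- A nontrivial connected spanning convex subgraph of `C_n^2` containing at least one
frame is a strip graph with tails `S_{n,k,j}` with `0 ≤ j ≤ n - 1` and
`0 ≤ k ≤ ⌊(n-2)/2⌋`. -/
theorem convex_subgraph_with_frame_eq_stripTails (n : ℕ) (hn : 5 ≤ n)
    (G : SimpleGraph (ZMod n)) (hle : G ≤ squareCycle n)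
    (hconn : G.Connected) (hconv : IsConvex n G) (hnt : ¬ IsTrivialSub n G)
    (hframe : ∃ i : ℤ, frame n i ∈ G.edgeSet) :
    ∃ j k : ℤ, 0 ≤ j ∧ j ≤ (n : ℤ) - 1 ∧ 0 ≤ k ∧ k ≤ ⌊((n : ℚ) - 2) / 2⌋ ∧
      G = stripTails n k j := by
  classical
  haveI : NeZero n := ⟨by omega⟩
  have hcr : ∀ u : ZMod n, (SqCProof.Fr G u → SqCProof.Fr G (u + 1) → SqCProof.Wi G u) ∧
      (SqCProof.Fr G u → SqCProof.Wi G u → SqCProof.Fr G (u + 1)) ∧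
      (SqCProof.Wi G u → SqCProof.Fr G (u + 1) → SqCProof.Fr G u) :=
    fun u => SqCProof.conv_rules hn hconv u
  -- there is a frame
  obtain ⟨i0, hi0⟩ := hframe
  have hF0 : SqCProof.Fr G ((i0 : ZMod n)) := by
    rw [SqCProof.frame_eq'] at hi0
    exact G.mem_edgeSet.mp hi0
  -- there is a missing frame
  have hmiss : ∃ u : ZMod n, ¬ SqCProof.Fr G u := by
    by_contra hall
    push_neg at hall
    apply hnt
    left
    ext u v
    constructor
    · intro h; exact hle h
    · intro h
      rcases SqCProof.adj_cases hn le_rfl h with ⟨hv, -⟩ | ⟨hv, -⟩ | ⟨hv, -⟩ | ⟨hv, -⟩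
      · subst hv; exact hall u
      · subst hv; exact (hall v).symm
      · subst hv; exact (hcr u).1 (hall u) (hall (u + 1))
      · subst hv; exact ((hcr v).1 (hall v) (hall (v + 1))).symm
  obtain ⟨w0, hw0⟩ := hmiss
  -- find a boundary: a with frame, a+1 without
  have hexd : ∃ d : ℕ, ¬ SqCProof.Fr G ((i0 : ZMod n) + (d : ZMod n)) := by
    refine ⟨(w0 - (i0 : ZMod n)).val, ?_⟩
    have e : (i0 : ZMod n) + (((w0 - (i0 : ZMod n)).val : ℕ) : ZMod n) = w0 := by
      rw [ZMod.natCast_val, ZMod.cast_id]; ring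
    rw [e]; exact hw0
  set d0 := Nat.find hexd with hd0def
  have hd0 : ¬ SqCProof.Fr G ((i0 : ZMod n) + (d0 : ZMod n)) := Nat.find_spec hexd
  have hd0pos : d0 ≠ 0 := by
    intro h0
    rw [h0] at hd0
    norm_num at hd0
    exact hd0 hF0
  set a : ZMod n := (i0 : ZMod n) + ((d0 - 1 : ℕ) : ZMod n) with hadef
  have hFa : SqCProof.Fr G a := by
    by_contra hcon
    exact Nat.find_min hexd (show d0 - 1 < d0 by omega) hcon
  have hFa1 : ¬ SqCProof.Fr G (a + 1) := by
    have e : a + 1 = (i0 : ZMod n) + (d0 : ZMod n) := by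
      rw [hadef, Nat.cast_sub (by omega : 1 ≤ d0), Nat.cast_one]
      ring
    rw [e]; exact hd0
  obtain ⟨L, gd⟩ := SqCProof.gap_make hn hcr a hFa hFa1
  obtain ⟨kk, hkk⟩ := SqCProof.gap_odd hn hle hconn gd
  have hAll := SqCProof.gap_all hn hle hconn hcr gd
  have hlen := gd.len
  have hpos := gd.pos
  -- characterization of G
  have hFrG : ∀ s : ℕ, s ≤ n - 1 → (SqCProof.Fr G (a + (s : ZMod n)) ↔ ¬ (1 ≤ s ∧ s ≤ L)) := by
    intro s hs
    constructor
    · intro h hin; exact gd.absent s hin.1 hin.2 h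
    · intro h
      rcases Nat.eq_zero_or_pos s with h0 | h0
      · subst h0
        simpa using gd.hFa
      · exact hAll s (by omega) hs
  have hWiG : ∀ s : ℕ, s ≤ n - 1 → (SqCProof.Wi G (a + (s : ZMod n)) ↔ (s ≠ 0 ∧ s ≠ L)) := by
    intro s hs
    constructor
    · intro h
      constructor
      · rintro rfl; apply gd.wbot; simpa using h
      · rintro rfl; exact gd.wtop h
    · rintro ⟨h0, hL0⟩
      rcases Nat.lt_or_ge s L with hlt | hge
      · exact SqCProof.gap_windows hn hle hconn gd s (by omega) (by omega)
      · have f1 : SqCProof.Fr G (a + (s : ZMod n)) := hAll s (by omega) hs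
        have f2 : SqCProof.Fr G ((a + (s : ZMod n)) + 1) := by
          by_cases hsn : s = n - 1
          · rw [show (a + (s : ZMod n)) + 1 = a by
              rw [hsn, add_assoc, show ((n - 1 : ℕ) : ZMod n) + 1 = 0 by
                rw [show ((n - 1 : ℕ) : ZMod n) + 1 = ((n - 1 + 1 : ℕ) : ZMod n) by
                  push_cast; ring,
                  Nat.sub_add_cancel (by omega : 1 ≤ n), ZMod.natCast_self], add_zero]]
            exact gd.hFa
          · rw [show (a + (s : ZMod n)) + 1 = a + ((s + 1 : ℕ) : ZMod n) by push_cast; ring]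
            exact hAll (s + 1) (by omega) (by omega)
        exact (hcr _).1 f1 f2
  -- characterization of the strip graph
  have hja : (((a.val : ℤ) : ℤ) : ZMod n) = a := by
    rw [Int.cast_natCast, ZMod.natCast_val, ZMod.cast_id]
  have h2k1 : ((a.val : ℤ)) + 2 * (kk : ℤ) + 1 = ((a.val : ℤ)) + (L : ℤ) := by
    rw [hkk]; push_cast; ring
  have hFrST : ∀ s : ℕ, s ≤ n - 1 →
      (SqCProof.Fr (stripTails n (kk : ℤ) (a.val : ℤ)) (a + (s : ZMod n)) ↔ ¬ (1 ≤ s ∧ s ≤ L)) := by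
    intro s hs
    have h1 : SqCProof.Fr (stripTails n (kk : ℤ) (a.val : ℤ)) (a + (s : ZMod n)) ↔
        ¬ s(a + (s : ZMod n), a + (s : ZMod n) + 1) ∈ escapeRoute n (kk : ℤ) (a.val : ℤ) := by
      unfold SqCProof.Fr stripTails
      rw [SimpleGraph.deleteEdges_adj]
      constructor
      · rintro ⟨-, h2⟩; exact h2
      · intro h2; exact ⟨SqCProof.sq_adj_frame hn _, h2⟩
    rw [h1, SqCProof.frame_mem_escape hn, h2k1,
      SqCProof.int_window hn hja (by omega) hs]
  have hWiST : ∀ s : ℕ, s ≤ n - 1 →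
      (SqCProof.Wi (stripTails n (kk : ℤ) (a.val : ℤ)) (a + (s : ZMod n)) ↔ (s ≠ 0 ∧ s ≠ L)) := by
    intro s hs
    have h1 : SqCProof.Wi (stripTails n (kk : ℤ) (a.val : ℤ)) (a + (s : ZMod n)) ↔
        ¬ (a + (s : ZMod n) = (((a.val : ℤ) : ℤ) : ZMod n) ∨
           a + (s : ZMod n) = (((a.val : ℤ) + 2 * (kk : ℤ) + 1 : ℤ) : ZMod n)) := by
      unfold SqCProof.Wi stripTails
      rw [SimpleGraph.deleteEdges_adj, SqCProof.window_mem_escape hn]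
      constructor
      · rintro ⟨-, h2⟩; exact h2
      · intro h2; exact ⟨SqCProof.sq_adj_window hn _, h2⟩
    rw [h1]
    have e1 : (a + (s : ZMod n) = (((a.val : ℤ) : ℤ) : ZMod n)) ↔ s = 0 := by
      rw [hja]
      constructor
      · intro h
        have h0 : ((s : ℕ) : ZMod n) = 0 := add_eq_left.mp h
        rw [ZMod.natCast_eq_zero_iff] at h0
        by_contra hs0
        have := Nat.le_of_dvd (by omega) h0
        omega
      · rintro rfl; norm_num
    have e2 : (a + (s : ZMod n) = (((a.val : ℤ) + 2 * (kk : ℤ) + 1 : ℤ) : ZMod n)) ↔ s = L := by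
      have ecast : (((a.val : ℤ) + 2 * (kk : ℤ) + 1 : ℤ) : ZMod n) = a + ((L : ℕ) : ZMod n) := by
        rw [h2k1, Int.cast_add, hja, Int.cast_natCast]
      rw [ecast, add_right_inj]
      exact SqCProof.cast_nat_inj hn (by omega) (by omega)
    rw [e1, e2, not_or]
  -- decompose any vertex
  have hdecomp : ∀ u : ZMod n, ∃ s : ℕ, s ≤ n - 1 ∧ u = a + (s : ZMod n) := by
    intro u
    refine ⟨(u - a).val, by have := ZMod.val_lt (u - a); omega, ?_⟩
    rw [ZMod.natCast_val, ZMod.cast_id]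
    ring
  have hFrEq : ∀ u : ZMod n, SqCProof.Fr G u ↔ SqCProof.Fr (stripTails n (kk : ℤ) (a.val : ℤ)) u := by
    intro u
    obtain ⟨s, hs, rfl⟩ := hdecomp u
    rw [hFrG s hs, hFrST s hs]
  have hWiEq : ∀ u : ZMod n, SqCProof.Wi G u ↔ SqCProof.Wi (stripTails n (kk : ℤ) (a.val : ℤ)) u := by
    intro u
    obtain ⟨s, hs, rfl⟩ := hdecomp u
    rw [hWiG s hs, hWiST s hs]
  have hSTle : stripTails n (kk : ℤ) (a.val : ℤ) ≤ squareCycle n :=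
    SimpleGraph.deleteEdges_le _
  have hGeq : G = stripTails n (kk : ℤ) (a.val : ℤ) := by
    ext u v
    constructor
    · intro h
      rcases SqCProof.adj_cases hn hle h with ⟨hv, hA⟩ | ⟨hv, hA⟩ | ⟨hv, hA⟩ | ⟨hv, hA⟩
      · subst hv; exact (hFrEq u).mp hA
      · subst hv; exact ((hFrEq v).mp hA).symm
      · subst hv; exact (hWiEq u).mp hA
      · subst hv; exact ((hWiEq v).mp hA).symm
    · intro h
      rcases SqCProof.adj_cases hn hSTle h with ⟨hv, hA⟩ | ⟨hv, hA⟩ | ⟨hv, hA⟩ | ⟨hv, hA⟩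
      · subst hv; exact (hFrEq u).mpr hA
      · subst hv; exact ((hFrEq v).mpr hA).symm
      · subst hv; exact (hWiEq u).mpr hA
      · subst hv; exact ((hWiEq v).mpr hA).symm
  refine ⟨(a.val : ℤ), (kk : ℤ), by positivity, ?_, by positivity, ?_, hGeq⟩
  · have := ZMod.val_lt a
    omega
  · rw [Int.le_floor, le_div_iff₀ (by norm_num : (0 : ℚ) < 2)]
    have h1 : 2 * kk + 2 ≤ n := by omega
    have h2 : ((2 * kk + 2 : ℕ) : ℚ) ≤ (n : ℚ) := Nat.cast_le.mpr h1
    push_cast at h2 ⊢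
    linarith
end

section
/- Let n ≥ 5 be an integer and let G be a nontrivial connected spanning convex subgraph of the square cycle C_n^2. If the edge set of G contains no frame, then n is odd and G = S_{n,(n-1)/2,j} for some integer j with 0 ≤ j ≤ n-1; equivalently, the edge set of G is the set of all windows except a single window f_j. -/
open SimpleGraph

private lemma sq_aux_const {V α : Type*} {G : SimpleGraph V} (hc : G.Connected)
    (f : V → α) (h : ∀ u v, G.Adj u v → f u = f v) (u v : V) : f u = f v := by
  obtain ⟨w⟩ := hc.preconnected u v
  induction w with
  | nil => rfl
  | cons h' p ih => exact (h _ _ h').trans ih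

private def Wfun (n : ℕ) : ZMod n → Sym2 (ZMod n) := fun u => s(u, u + 2)

/-- A nontrivial connected spanning convex subgraph of `C_n^2` containing no frame
forces `n` odd, and the subgraph is `S_{n,(n-1)/2,j}` for some `0 ≤ j ≤ n - 1`;
equivalently its edge set consists of all windows except the single window `f_j`. -/
theorem convex_subgraph_no_frame (n : ℕ) (hn : 5 ≤ n)
    (G : SimpleGraph (ZMod n)) (hle : G ≤ squareCycle n)
    (hconn : G.Connected) (hconv : IsConvex n G) (hnt : ¬ IsTrivialSub n G)
    (hframe : ∀ i : ℤ, frame n i ∉ G.edgeSet) :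
    Odd n ∧ ∃ j : ℤ, 0 ≤ j ∧ j ≤ (n : ℤ) - 1 ∧
      G = stripTails n (((n : ℤ) - 1) / 2) j ∧
      G.edgeSet = Set.range (window n) \ {window n j} := by
  haveI : NeZero n := ⟨by omega⟩
  haveI : Fact (1 < n) := ⟨by omega⟩
  have hvc : ∀ u : ZMod n, ((u.val : ℕ) : ZMod n) = u := fun u => ZMod.natCast_rightInverse u
  have hivc : ∀ u : ZMod n, (((u.val : ℤ)) : ZMod n) = u := fun u => by push_cast; exact hvc u
  have h1z : (1 : ZMod n) ≠ 0 := by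
    intro h
    have h2 : n ∣ 1 := (ZMod.natCast_eq_zero_iff 1 n).mp (by exact_mod_cast h)
    have := Nat.le_of_dvd one_pos h2; omega
  have h3z : (3 : ZMod n) ≠ 0 := by
    intro h
    have h2 : n ∣ 3 := (ZMod.natCast_eq_zero_iff 3 n).mp (by exact_mod_cast h)
    have := Nat.le_of_dvd (by norm_num) h2; omega
  have h4z : (4 : ZMod n) ≠ 0 := by
    intro h
    have h2 : n ∣ 4 := (ZMod.natCast_eq_zero_iff 4 n).mp (by exact_mod_cast h)
    have := Nat.le_of_dvd (by norm_num) h2; omega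
  have hfrZ : ∀ i : ℤ, frame n i = s((i : ZMod n), (i : ZMod n) + 1) := by
    intro i; unfold frame; congr 1; push_cast; ring
  have hwinZ : ∀ i : ℤ, window n i = Wfun n ((i : ZMod n)) := by
    intro i; unfold window Wfun; congr 1; push_cast; ring
  have hWdef : ∀ u : ZMod n, Wfun n u = s(u, u + 2) := fun _ => rfl
  -- no edge of G of the form s(x, x+1)
  have hframe' : ∀ x : ZMod n, s(x, x + 1) ∉ G.edgeSet := by
    intro x hx
    exact hframe (x.val : ℤ) (by rw [hfrZ, hivc x]; exact hx)
  -- all edges of G are windows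
  have hsubW : G.edgeSet ⊆ Set.range (Wfun n) := by
    intro e he
    induction e using Sym2.ind with
    | _ u v =>
      have he2 : (squareCycle n).Adj u v := hle ((SimpleGraph.mem_edgeSet G).mp he)
      rw [squareCycle, SimpleGraph.fromRel_adj] at he2
      obtain ⟨hne, hc⟩ := he2
      rcases hc with (h | h) | (h | h)
      · exfalso
        have hu : u = v + 1 := by linear_combination h
        subst hu
        exact hframe' v (by rwa [Sym2.eq_swap] at he)
      · have hu : u = v + 2 := by linear_combination h
        subst hu
        exact ⟨v, by rw [hWdef, Sym2.eq_swap]⟩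
      · exfalso
        have hv : v = u + 1 := by linear_combination h
        subst hv
        exact hframe' u he
      · have hv : v = u + 2 := by linear_combination h
        subst hv
        exact ⟨u, rfl⟩
  -- the ranges of window (ℤ-indexed) and Wfun agree
  have hrange : Set.range (window n) = Set.range (Wfun n) := by
    ext e; constructor
    · rintro ⟨i, rfl⟩; exact ⟨(i : ZMod n), (hwinZ i).symm⟩
    · rintro ⟨u, rfl⟩; exact ⟨(u.val : ℤ), by rw [hwinZ, hivc]⟩
  -- windows are never frames
  have hFW : ∀ e ∈ Set.range (window n), e ∉ Set.range (frame n) := by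
    rintro e ⟨i, rfl⟩ ⟨i', hI⟩
    rw [hfrZ] at hI; rw [hwinZ, hWdef] at hI
    rw [Sym2.eq_iff] at hI
    rcases hI with ⟨h1, h2⟩ | ⟨h1, h2⟩
    · exact h1z (by linear_combination h1 - h2)
    · exact h3z (by linear_combination h2 - h1)
  -- n is odd
  rcases Nat.even_or_odd n with heven | ho
  · exfalso
    have hdvd : (2 : ℕ) ∣ n := heven.two_dvd
    set f := ZMod.castHom hdvd (ZMod 2) with hf
    have f2 : f (2 : ZMod n) = 0 := by
      rw [show ((2 : ZMod n)) = ((2 : ℕ) : ZMod n) by norm_cast, map_natCast]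
      decide
    have key : ∀ u v, G.Adj u v → (⇑f) u = (⇑f) v := by
      intro u v huv
      obtain ⟨x, hx⟩ := hsubW ((SimpleGraph.mem_edgeSet G).mpr huv)
      rw [hWdef, Sym2.eq_iff] at hx
      have hstep : f x = f (x + 2) := by rw [map_add, f2, add_zero]
      rcases hx with ⟨rfl, rfl⟩ | ⟨rfl, rfl⟩
      · exact hstep
      · exact hstep.symm
    have h01 := sq_aux_const hconn (⇑f) key 0 1
    rw [map_zero, map_one] at h01
    exact (by decide : (0 : ZMod 2) ≠ 1) h01
  refine ⟨ho, ?_⟩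
  -- inverse of 2
  set c : ZMod n := (((n + 1) / 2 : ℕ) : ZMod n) with hcdef
  have h2c : (2 : ZMod n) * c = 1 := by
    have h1 : ((2 * ((n + 1) / 2) : ℕ) : ZMod n) = ((n + 1 : ℕ) : ZMod n) := by
      congr 1
      obtain ⟨m, hm⟩ := ho
      omega
    calc (2 : ZMod n) * c = ((2 * ((n + 1) / 2) : ℕ) : ZMod n) := by push_cast [hcdef]; ring
      _ = ((n + 1 : ℕ) : ZMod n) := h1
      _ = 1 := by push_cast [ZMod.natCast_self]; ring
  -- Wfun is injective
  have hWinj : ∀ x y : ZMod n, Wfun n x = Wfun n y → x = y := by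
    intro x y hxy
    rw [hWdef, hWdef, Sym2.eq_iff] at hxy
    rcases hxy with ⟨h1, _⟩ | ⟨h1, h2⟩
    · exact h1
    · exact absurd (by linear_combination h2 - h1 : (4 : ZMod n) = 0) h4z
  -- some window is missing
  have hne_all : G.edgeSet ≠ Set.range (window n) := fun h => hnt (Or.inr ⟨ho, h⟩)
  have hmiss : ∃ u : ZMod n, Wfun n u ∉ G.edgeSet := by
    by_contra h; push_neg at h
    apply hne_all
    refine subset_antisymm (fun e he => hrange ▸ hsubW he) ?_
    rintro e ⟨i, rfl⟩
    rw [hwinZ]; exact h _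
  obtain ⟨a, ha⟩ := hmiss
  -- auxiliary val facts
  have hvalinj : ∀ t t' : ZMod n, t.val = t'.val → t = t' := by
    intro t t' h; rw [← hvc t, ← hvc t', h]
  have hvalsucc : ∀ t : ZMod n, t ≠ -1 → (t + 1).val = t.val + 1 := by
    intro t ht
    have hlt : t.val < n := ZMod.val_lt t
    have h1 : t.val + 1 < n := by
      by_contra hcon
      have hv : t.val + 1 = n := by omega
      apply ht
      have e2 : ((t.val : ℕ) : ZMod n) = -1 := by
        have h0 : (((t.val + 1 : ℕ)) : ZMod n) = 0 := by rw [hv]; exact ZMod.natCast_self n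
        push_cast at h0
        linear_combination h0
      rw [← hvc t, e2]
    have h2 : t + 1 = ((t.val + 1 : ℕ) : ZMod n) := by push_cast [hvc t]; ring
    rw [h2, ZMod.val_cast_of_lt h1]
  -- at most one window is missing
  have huniq : ∀ u : ZMod n, Wfun n u ∉ G.edgeSet → u = a := by
    intro b hb; by_contra hba
    set ψ : ZMod n → ZMod n := fun x => c * (x - (a + 2)) with hψ
    have hψadd : ∀ x, ψ (x + 2) = ψ x + 1 := by
      intro x; simp only [hψ]; linear_combination h2c
    have hψinj : ∀ x y, ψ x = ψ y → x = y := by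
      intro x y h; simp only [hψ] at h
      linear_combination 2 * h - (x - y) * h2c
    have hψa : ψ a = -1 := by simp only [hψ]; linear_combination -h2c
    have ht0 : ψ b ≠ -1 := fun h => hba (hψinj b a (by rw [h, ← hψa]))
    set P : ZMod n → Prop := fun x => (ψ x).val ≤ (ψ b).val with hP
    have key : ∀ u v, G.Adj u v → P u = P v := by
      intro u v huv
      obtain ⟨x, hx⟩ := hsubW ((SimpleGraph.mem_edgeSet G).mpr huv)
      have hxG : Wfun n x ∈ G.edgeSet := by
        rw [hx]; exact (SimpleGraph.mem_edgeSet G).mpr huv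
      have hxa : x ≠ a := fun h => ha (h ▸ hxG)
      have hxb : x ≠ b := fun h => hb (h ▸ hxG)
      have hψx1 : ψ x ≠ -1 := fun h => hxa (hψinj _ _ (h.trans hψa.symm))
      have hψxb : ψ x ≠ ψ b := fun h => hxb (hψinj _ _ h)
      have hv : (ψ (x + 2)).val = (ψ x).val + 1 := by
        rw [hψadd]; exact hvalsucc _ hψx1
      have hneval : (ψ x).val ≠ (ψ b).val := fun h => hψxb (hvalinj _ _ h)
      have hstep : P x = P (x + 2) := by
        simp only [hP, hv]
        exact propext (by omega)
      rw [hWdef, Sym2.eq_iff] at hx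
      rcases hx with ⟨rfl, rfl⟩ | ⟨rfl, rfl⟩
      · exact hstep
      · exact hstep.symm
    have hconst := sq_aux_const hconn P key b (b + 2)
    have hPb : P b := le_refl _
    have hPb2 : P (b + 2) := hconst ▸ hPb
    have hv2 : (ψ (b + 2)).val = (ψ b).val + 1 := by rw [hψadd]; exact hvalsucc _ ht0
    simp only [hP] at hPb2
    omega
  -- the distinguished index
  set j : ℤ := (a.val : ℤ) with hj
  have hja : ((j : ℤ) : ZMod n) = a := hivc a
  have hwj : window n j = Wfun n a := by rw [hwinZ, hja]
  -- edge set description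
  have hEG : G.edgeSet = Set.range (window n) \ {window n j} := by
    ext e; constructor
    · intro he
      refine ⟨hrange ▸ hsubW he, ?_⟩
      simp only [Set.mem_singleton_iff]
      intro hcon
      rw [hcon, hwj] at he
      exact ha he
    · rintro ⟨⟨i, rfl⟩, hne⟩
      rw [hwinZ]
      by_contra hno
      have := huniq _ hno
      apply hne
      simp only [Set.mem_singleton_iff]
      rw [hwinZ, this, hwj]
  -- the square cycle's edges are frames and windows
  have hSQ : (squareCycle n).edgeSet = Set.range (frame n) ∪ Set.range (window n) := by
    ext e
    induction e using Sym2.ind with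
    | _ u v =>
      constructor
      · intro he
        rw [SimpleGraph.mem_edgeSet, squareCycle, SimpleGraph.fromRel_adj] at he
        obtain ⟨hne, hc⟩ := he
        rcases hc with (h | h) | (h | h)
        · have hu : u = v + 1 := by linear_combination h
          subst hu
          exact Or.inl ⟨(v.val : ℤ), by rw [hfrZ, hivc, Sym2.eq_swap]⟩
        · have hu : u = v + 2 := by linear_combination h
          subst hu
          exact Or.inr ⟨(v.val : ℤ), by rw [hwinZ, hivc, hWdef, Sym2.eq_swap]⟩
        · have hv : v = u + 1 := by linear_combination h
          subst hv
          exact Or.inl ⟨(u.val : ℤ), by rw [hfrZ, hivc]⟩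
        · have hv : v = u + 2 := by linear_combination h
          subst hv
          exact Or.inr ⟨(u.val : ℤ), by rw [hwinZ, hivc, hWdef]⟩
      · intro he
        rw [SimpleGraph.mem_edgeSet]
        rcases he with ⟨i, hi⟩ | ⟨i, hi⟩
        · rw [hfrZ] at hi
          rw [Sym2.eq_iff] at hi
          rcases hi with ⟨rfl, rfl⟩ | ⟨rfl, rfl⟩
          · rw [squareCycle, SimpleGraph.fromRel_adj]
            exact ⟨fun h => h1z (by linear_combination -h), Or.inr (Or.inl (by ring))⟩
          · rw [squareCycle, SimpleGraph.fromRel_adj]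
            exact ⟨fun h => h1z (by linear_combination h), Or.inl (Or.inl (by ring))⟩
        · rw [hwinZ, hWdef] at hi
          rw [Sym2.eq_iff] at hi
          rcases hi with ⟨rfl, rfl⟩ | ⟨rfl, rfl⟩
          · rw [squareCycle, SimpleGraph.fromRel_adj]
            refine ⟨fun h => ?_, Or.inr (Or.inr (by ring))⟩
            · have h2 : (2 : ZMod n) = 0 := by linear_combination -h
              have h2' : n ∣ 2 := (ZMod.natCast_eq_zero_iff 2 n).mp (by exact_mod_cast h2)
              have := Nat.le_of_dvd (by norm_num) h2'; omega
          · rw [squareCycle, SimpleGraph.fromRel_adj]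
            refine ⟨fun h => ?_, Or.inl (Or.inr (by ring))⟩
            · have h2 : (2 : ZMod n) = 0 := by linear_combination h
              have h2' : n ∣ 2 := (ZMod.natCast_eq_zero_iff 2 n).mp (by exact_mod_cast h2)
              have := Nat.le_of_dvd (by norm_num) h2'; omega
  -- escape route description
  set k : ℤ := (((n : ℤ) - 1) / 2) with hkdef
  have hk : 2 * k + 1 = (n : ℤ) := by
    obtain ⟨m, hm⟩ := ho
    omega
  have hES : escapeRoute n k j = {window n j} ∪ Set.range (frame n) := by
    have hw2 : window n (j + 2 * k + 1) = window n j := by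
      rw [hwinZ, hwinZ]
      congr 1
      rw [show j + 2 * k + 1 = j + (2 * k + 1) by ring, hk]
      push_cast [ZMod.natCast_self]
      ring
    have hIm : frame n '' {i : ℤ | j + 1 ≤ i ∧ i ≤ j + 2 * k + 1} = Set.range (frame n) := by
      refine subset_antisymm (Set.image_subset_range _ _) ?_
      rintro e ⟨i, rfl⟩
      have hn0 : (0 : ℤ) < (n : ℤ) := by exact_mod_cast (by omega : 0 < n)
      have hr1 : 0 ≤ (i - j - 1) % (n : ℤ) := Int.emod_nonneg _ (by omega)
      have hr2 : (i - j - 1) % (n : ℤ) < (n : ℤ) := Int.emod_lt_of_pos _ hn0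
      refine ⟨j + 1 + (i - j - 1) % (n : ℤ), ⟨by omega, by omega⟩, ?_⟩
      rw [hfrZ, hfrZ]
      have hmod : ((j + 1 + (i - j - 1) % (n : ℤ) : ℤ) : ZMod n) = ((i : ℤ) : ZMod n) := by
        rw [ZMod.intCast_eq_intCast_iff]
        have hmm : ((i - j - 1) % (n : ℤ)) ≡ (i - j - 1) [ZMOD (n : ℤ)] :=
          Int.emod_emod_of_dvd _ dvd_rfl
        have h2 := Int.ModEq.add_left (j + 1) hmm
        rwa [show j + 1 + (i - j - 1) = i by ring] at h2
      rw [hmod]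
    rw [escapeRoute, hw2, Set.pair_eq_singleton, hIm]
  -- the strip graph's edge set
  have hST : (stripTails n k j).edgeSet = Set.range (window n) \ {window n j} := by
    rw [stripTails, SimpleGraph.edgeSet_deleteEdges, hSQ, hES]
    ext e
    have hfw := hFW e
    simp only [Set.mem_diff, Set.mem_union, Set.mem_singleton_iff]
    constructor
    · rintro ⟨hF | hWd, hnot⟩
      · exact absurd (Or.inr hF) hnot
      · exact ⟨hWd, fun h => hnot (Or.inl h)⟩
    · rintro ⟨hWd, hne⟩
      exact ⟨Or.inr hWd, fun h => (h.elim hne (hfw hWd))⟩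
  refine ⟨j, by positivity, ?_, ?_, hEG⟩
  · have := ZMod.val_lt a
    omega
  · rw [← SimpleGraph.edgeSet_inj, hEG, hST]
end

section
/- Let n ≥ 5 be an integer and let G be a connected spanning convex subgraph of the square cycle C_n^2. If k and p are integers with 0 ≤ p < n such that the edges e_{k-1}, f_k, f_{k+2}, …, f_{k+2p-2}, e_{k+2p} all belong to E(G), then the edges e_k, e_{k+1}, …, e_{k+2p-1} all belong to E(G). -/
open SimpleGraph

private lemma cross_edge {V : Type*} (G : SimpleGraph V) (A : Set V) :
    ∀ {u v : V}, G.Walk u v → u ∈ A → v ∉ A →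
      ∃ a b, G.Adj a b ∧ a ∈ A ∧ b ∉ A := by
  intro u v w
  induction w with
  | nil => intro h h'; exact absurd h h'
  | @cons u x v h pp ih =>
      intro hu hv
      by_cases hx : x ∈ A
      · exact ih hx hv
      · exact ⟨u, x, h, hu, hx⟩

private lemma key {n : ℕ} {G : SimpleGraph (ZMod n)} (hconv : IsConvex n G) (i : ℤ)
    {x y : Sym2 (ZMod n)} (hx : x ∈ triangle n i) (hy : y ∈ triangle n i) (hxy : x ≠ y)
    (hxE : x ∈ G.edgeSet) (hyE : y ∈ G.edgeSet) : triangle n i ⊆ G.edgeSet := by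
  rcases hconv i with h | h
  · exfalso
    have hfin : (triangle n i ∩ G.edgeSet).Finite := by
      apply Set.Finite.inter_of_left
      unfold triangle
      exact ((Set.finite_singleton _).insert _).insert _
    have hsub : ({x, y} : Set (Sym2 (ZMod n))) ⊆ triangle n i ∩ G.edgeSet := by
      intro z hz
      rcases hz with rfl | hz
      · exact ⟨hx, hxE⟩
      · rcases hz with rfl; exact ⟨hy, hyE⟩
    have hcard := Set.ncard_le_ncard hsub hfin
    rw [Set.ncard_pair hxy] at hcard
    omega
  · exact h

/-- If a connected spanning convex subgraph `G` of `C_n^2` contains the edges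
`e_{k-1}, f_k, f_{k+2}, …, f_{k+2p-2}, e_{k+2p}` (with `0 ≤ p < n`), then it contains
the frames `e_k, e_{k+1}, …, e_{k+2p-1}`. -/
theorem frames_between (n : ℕ) (hn : 5 ≤ n) (G : SimpleGraph (ZMod n))
    (hle : G ≤ squareCycle n) (hconn : G.Connected) (hconv : IsConvex n G)
    (k p : ℤ) (hp0 : 0 ≤ p) (hpn : p < (n : ℤ))
    (he1 : frame n (k - 1) ∈ G.edgeSet)
    (he2 : frame n (k + 2 * p) ∈ G.edgeSet)
    (hw : ∀ i : ℤ, 0 ≤ i → i < p → window n (k + 2 * i) ∈ G.edgeSet) :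
    ∀ i : ℤ, 0 ≤ i → i ≤ 2 * p - 1 → frame n (k + i) ∈ G.edgeSet := by
  intro i0 hi00 hi01
  by_contra hmiss
  classical
  haveI : NeZero n := ⟨by omega⟩
  have hnz : ∀ m : ℕ, 0 < m → m < 5 → (m : ZMod n) ≠ 0 := by
    intro m hm1 hm2 hh
    rw [ZMod.natCast_eq_zero_iff] at hh
    have := Nat.le_of_dvd hm1 hh
    omega
  have h10 : (1 : ZMod n) ≠ 0 := by have := hnz 1 one_pos (by omega); push_cast at this; exact this
  have h20 : (2 : ZMod n) ≠ 0 := by have := hnz 2 (by omega) (by omega); push_cast at this; exact this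
  -- distinctness of the triangle edges
  have hfw : ∀ i : ℤ, frame n i ≠ window n i := by
    intro i h
    unfold frame window at h
    rw [Sym2.eq_iff] at h
    rcases h with ⟨h1, h2⟩ | ⟨h1, h2⟩
    · exact h10 (by push_cast at h2 ⊢; linear_combination - h2)
    · exact h20 (by push_cast at h1 ⊢; linear_combination - h1)
  have hfw' : ∀ i : ℤ, frame n (i + 1) ≠ window n i := by
    intro i h
    unfold frame window at h
    rw [Sym2.eq_iff] at h
    rcases h with ⟨h1, h2⟩ | ⟨h1, h2⟩
    · exact h10 (by push_cast at h1 ⊢; linear_combination h1)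
    · exact h20 (by push_cast at h2 ⊢; linear_combination h2)
  have memA : ∀ i : ℤ, frame n i ∈ triangle n i := fun i => Or.inl rfl
  have memB : ∀ i : ℤ, frame n (i + 1) ∈ triangle n i := fun i => Or.inr (Or.inl rfl)
  have memC : ∀ i : ℤ, window n i ∈ triangle n i := fun i => Or.inr (Or.inr rfl)
  have convA : ∀ i : ℤ, frame n i ∈ G.edgeSet → window n i ∈ G.edgeSet →
      frame n (i + 1) ∈ G.edgeSet := by
    intro i hf hwin
    exact key hconv i (memA i) (memC i) (hfw i) hf hwin (memB i)
  have convB : ∀ i : ℤ, frame n (i + 1) ∈ G.edgeSet → window n i ∈ G.edgeSet →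
      frame n i ∈ G.edgeSet := by
    intro i hf hwin
    exact key hconv i (memB i) (memC i) (hfw' i) hf hwin (memA i)
  -- pairing via the even windows
  have pair : ∀ t : ℤ, 0 ≤ t → t ≤ p - 1 →
      (frame n (k + 2 * t) ∈ G.edgeSet ↔ frame n (k + 2 * t + 1) ∈ G.edgeSet) := by
    intro t h0 h1
    constructor
    · intro h; exact convA (k + 2 * t) h (hw t h0 (by omega))
    · intro h; exact convB (k + 2 * t) h (hw t h0 (by omega))
  have hp1 : 1 ≤ p := by omega
  -- some even frame is missing
  have hstart : ∃ t : ℤ, 0 ≤ t ∧ t ≤ p - 1 ∧ frame n (k + 2 * t) ∉ G.edgeSet := by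
    rcases Int.even_or_odd i0 with ⟨t, ht⟩ | ⟨t, ht⟩
    · refine ⟨t, by omega, by omega, ?_⟩
      rw [show k + 2 * t = k + i0 by omega]
      exact hmiss
    · refine ⟨t, by omega, by omega, fun h => ?_⟩
      have := (pair t (by omega) (by omega)).mp h
      rw [show k + 2 * t + 1 = k + i0 by omega] at this
      exact hmiss this
  have hQ : ∃ s : ℕ, (s : ℤ) ≤ p - 1 ∧ frame n (k + 2 * (s : ℤ)) ∉ G.edgeSet := by
    obtain ⟨t, ht0, ht1, htm⟩ := hstart
    refine ⟨t.toNat, by omega, ?_⟩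
    rw [show ((t.toNat : ℕ) : ℤ) = t by omega]
    exact htm
  obtain ⟨ht01, ht02⟩ := Nat.find_spec hQ
  have hP : ∃ s : ℕ, Nat.find hQ ≤ s ∧
      ((s : ℤ) = p - 1 ∨ frame n (k + 2 * ((s : ℤ) + 1)) ∈ G.edgeSet) :=
    ⟨(p - 1).toNat, by omega, Or.inl (by omega)⟩
  obtain ⟨hbt0, hbor⟩ := Nat.find_spec hP
  have hble : ((Nat.find hP : ℕ) : ℤ) ≤ p - 1 := by
    have h1 : Nat.find hP ≤ (p - 1).toNat :=
      Nat.find_min' hP ⟨by omega, Or.inl (by omega)⟩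
    omega
  -- the run of missing even frames
  have hrunN : ∀ s : ℕ, Nat.find hQ ≤ s → s ≤ Nat.find hP →
      frame n (k + 2 * (s : ℤ)) ∉ G.edgeSet := by
    intro s hs
    induction s, hs using Nat.le_induction with
    | base => intro _; exact ht02
    | succ s hs ih =>
        intro hsb h
        have h' : frame n (k + 2 * ((s : ℤ) + 1)) ∈ G.edgeSet := by
          rw [show k + 2 * ((s : ℤ) + 1) = k + 2 * (((s + 1 : ℕ)) : ℤ) by push_cast; ring]
          exact h
        exact Nat.find_min hP (show s < Nat.find hP by omega) ⟨hs, Or.inr h'⟩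
  have hrun : ∀ s : ℤ, ((Nat.find hQ : ℕ) : ℤ) ≤ s → s ≤ ((Nat.find hP : ℕ) : ℤ) →
      frame n (k + 2 * s) ∉ G.edgeSet ∧ frame n (k + 2 * s + 1) ∉ G.edgeSet := by
    intro s hs1 hs2
    have h1 : frame n (k + 2 * s) ∉ G.edgeSet := by
      have := hrunN s.toNat (by omega) (by omega)
      rwa [show ((s.toNat : ℕ) : ℤ) = s by omega] at this
    exact ⟨h1, fun h => h1 ((pair s (by omega) (by omega)).mpr h)⟩
  -- boundary windows are missing
  have hwlo : window n (k + 2 * ((Nat.find hQ : ℕ) : ℤ) - 1) ∉ G.edgeSet := by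
    intro hwin
    have hlo : frame n (k + 2 * ((Nat.find hQ : ℕ) : ℤ) - 1) ∉ G.edgeSet := by
      intro hf
      have := convA (k + 2 * ((Nat.find hQ : ℕ) : ℤ) - 1) hf hwin
      rw [show k + 2 * ((Nat.find hQ : ℕ) : ℤ) - 1 + 1 = k + 2 * ((Nat.find hQ : ℕ) : ℤ)
        by ring] at this
      exact (hrun (Nat.find hQ) le_rfl (by omega)).1 this
    rcases Nat.eq_zero_or_pos (Nat.find hQ) with h0 | h0
    · apply hlo
      rw [show k + 2 * ((Nat.find hQ : ℕ) : ℤ) - 1 = k - 1 by omega]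
      exact he1
    · have hQ1 : ((Nat.find hQ - 1 : ℕ) : ℤ) ≤ p - 1 := by omega
      have hmem : frame n (k + 2 * ((Nat.find hQ - 1 : ℕ) : ℤ)) ∈ G.edgeSet := by
        by_contra hfc
        exact Nat.find_min hQ (show Nat.find hQ - 1 < Nat.find hQ by omega) ⟨hQ1, hfc⟩
      apply hlo
      have h' := (pair (((Nat.find hQ : ℕ) : ℤ) - 1) (by omega) (by omega)).mp
        (by rwa [show k + 2 * (((Nat.find hQ : ℕ) : ℤ) - 1)
          = k + 2 * ((Nat.find hQ - 1 : ℕ) : ℤ) by omega])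
      rwa [show k + 2 * (((Nat.find hQ : ℕ) : ℤ) - 1) + 1
        = k + 2 * ((Nat.find hQ : ℕ) : ℤ) - 1 by ring] at h'
  have hwhi : window n (k + 2 * ((Nat.find hP : ℕ) : ℤ) + 1) ∉ G.edgeSet := by
    intro hwin
    have hodd := (hrun (Nat.find hP) (by omega) le_rfl).2
    have hhi : frame n (k + 2 * ((Nat.find hP : ℕ) : ℤ) + 2) ∉ G.edgeSet := by
      intro hf
      apply hodd
      apply convB (k + 2 * ((Nat.find hP : ℕ) : ℤ) + 1) _ hwin
      rwa [show k + 2 * ((Nat.find hP : ℕ) : ℤ) + 1 + 1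
        = k + 2 * ((Nat.find hP : ℕ) : ℤ) + 2 by ring]
    rcases hbor with hbp | hbin
    · apply hhi
      rw [show k + 2 * ((Nat.find hP : ℕ) : ℤ) + 2 = k + 2 * p by omega]
      exact he2
    · apply hhi
      rwa [show k + 2 * ((Nat.find hP : ℕ) : ℤ) + 2
        = k + 2 * (((Nat.find hP : ℕ) : ℤ) + 1) by ring]
  -- the cut
  have hu0 : ((k + 2 * ((Nat.find hQ : ℕ) : ℤ) + 1 : ℤ) : ZMod n) ∈
      (fun s : ℤ => ((k + 2 * s + 1 : ℤ) : ZMod n)) ''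
        Set.Icc ((Nat.find hQ : ℕ) : ℤ) ((Nat.find hP : ℕ) : ℤ) :=
    ⟨((Nat.find hQ : ℕ) : ℤ), ⟨le_rfl, by omega⟩, rfl⟩
  have hAne : (fun s : ℤ => ((k + 2 * s + 1 : ℤ) : ZMod n)) ''
      Set.Icc ((Nat.find hQ : ℕ) : ℤ) ((Nat.find hP : ℕ) : ℤ) ≠ Set.univ := by
    intro h
    have hfinIcc : (Set.Icc ((Nat.find hQ : ℕ) : ℤ) ((Nat.find hP : ℕ) : ℤ)).Finite :=
      Set.finite_Icc _ _
    have h1 := Set.ncard_image_le (f := fun s : ℤ => ((k + 2 * s + 1 : ℤ) : ZMod n)) hfinIcc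
    have h2 : (Set.Icc ((Nat.find hQ : ℕ) : ℤ) ((Nat.find hP : ℕ) : ℤ)).ncard
        = (((Nat.find hP : ℕ) : ℤ) + 1 - ((Nat.find hQ : ℕ) : ℤ)).toNat := by
      rw [← Finset.coe_Icc, Set.ncard_coe_finset, Int.card_Icc]
    rw [h, Set.ncard_univ, Nat.card_eq_fintype_card, ZMod.card] at h1
    omega
  obtain ⟨z, hz⟩ := (Set.ne_univ_iff_exists_notMem _).mp hAne
  obtain ⟨wlk⟩ := hconn.preconnected _ z
  obtain ⟨a, c, hadj, haA, hcA⟩ := cross_edge G _ wlk hu0 hz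
  obtain ⟨s, hs, rfl⟩ := haA
  rw [Set.mem_Icc] at hs
  obtain ⟨hs1, hs2⟩ := hs
  have hsq := hle hadj
  rw [squareCycle, SimpleGraph.fromRel_adj] at hsq
  have hedge : s(((k + 2 * s + 1 : ℤ) : ZMod n), c) ∈ G.edgeSet :=
    (SimpleGraph.mem_edgeSet G).mpr hadj
  obtain ⟨hne, hrel⟩ := hsq
  rcases hrel with (h1 | h2) | (h3 | h4)
  · -- c = a - 1 : frame (k+2s)
    have hc : c = ((k + 2 * s : ℤ) : ZMod n) := by push_cast at h1 ⊢; linear_combination - h1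
    apply (hrun s hs1 hs2).1
    rw [show frame n (k + 2 * s) = s(((k + 2 * s + 1 : ℤ) : ZMod n), c) from by
      rw [hc]; unfold frame; exact Sym2.eq_swap]
    exact hedge
  · -- c = a - 2 : window (k+2s-1), or c ∈ A
    have hc : c = ((k + 2 * s - 1 : ℤ) : ZMod n) := by push_cast at h2 ⊢; linear_combination - h2
    rcases eq_or_lt_of_le hs1 with heq | hlt
    · -- s = t0 : window missing
      apply hwlo
      rw [show k + 2 * ((Nat.find hQ : ℕ) : ℤ) - 1 = k + 2 * s - 1 by omega]
      rw [show window n (k + 2 * s - 1) = s(((k + 2 * s + 1 : ℤ) : ZMod n), c) from by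
        rw [hc]; unfold window
        rw [show k + 2 * s - 1 + 2 = k + 2 * s + 1 by ring]
        exact Sym2.eq_swap]
      exact hedge
    · -- s > t0 : c ∈ A
      apply hcA
      refine ⟨s - 1, Set.mem_Icc.mpr ⟨by omega, by omega⟩, ?_⟩
      rw [hc]; push_cast; ring_nf
  · -- c = a + 1 : frame (k+2s+1)
    have hc : c = ((k + 2 * s + 2 : ℤ) : ZMod n) := by push_cast at h3 ⊢; linear_combination h3
    apply (hrun s hs1 hs2).2
    rw [show frame n (k + 2 * s + 1) = s(((k + 2 * s + 1 : ℤ) : ZMod n), c) from by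
      rw [hc]; unfold frame
      rw [show k + 2 * s + 1 + 1 = k + 2 * s + 2 by ring]]
    exact hedge
  · -- c = a + 2 : window (k+2s+1), or c ∈ A
    have hc : c = ((k + 2 * s + 3 : ℤ) : ZMod n) := by push_cast at h4 ⊢; linear_combination h4
    rcases eq_or_lt_of_le hs2 with heq | hlt
    · -- s = b : window missing
      apply hwhi
      rw [show k + 2 * ((Nat.find hP : ℕ) : ℤ) + 1 = k + 2 * s + 1 by omega]
      rw [show window n (k + 2 * s + 1) = s(((k + 2 * s + 1 : ℤ) : ZMod n), c) from by
        rw [hc]; unfold window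
        rw [show k + 2 * s + 1 + 2 = k + 2 * s + 3 by ring]]
      exact hedge
    · -- s < b : c ∈ A
      apply hcA
      refine ⟨s + 1, Set.mem_Icc.mpr ⟨by omega, by omega⟩, ?_⟩
      rw [hc]; push_cast; ring_nf
end

section
/- Let n ≥ 5 be an integer, and let j, k be integers with 0 ≤ k ≤ ⌈(n-2)/2⌉. Then the strip graph with tails S_{n,k,j} is a connected spanning convex subgraph of the square cycle C_n^2. -/
open SimpleGraph

section Helpers
variable {n : ℕ}

lemma castEqDvd {t s : ℤ} (h : (n:ℤ) ∣ t - s) : (t : ZMod n) = (s : ZMod n) := by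
  rw [ZMod.intCast_eq_intCast_iff]
  exact (Int.modEq_iff_dvd.mpr h).symm

lemma castNeDvd {t s : ℤ} (h : ¬ ((n:ℤ) ∣ t - s)) : (t : ZMod n) ≠ (s : ZMod n) := by
  intro he
  rw [ZMod.intCast_eq_intCast_iff] at he
  exact h (Int.ModEq.dvd he.symm)

lemma castNe (hn : 0 < n) {t s : ℤ} (h1 : -(n:ℤ) < t - s) (h2 : t - s < n) (h3 : t ≠ s) :
    (t : ZMod n) ≠ (s : ZMod n) := by
  refine castNeDvd ?_
  rintro ⟨c, hc⟩
  have hn' : (0:ℤ) < n := by exact_mod_cast hn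
  have hc1 : c ≤ 0 := by
    by_contra h'
    push_neg at h'
    have : (n:ℤ) * 1 ≤ n * c := by
      exact mul_le_mul_of_nonneg_left h' (le_of_lt hn')
    linarith
  have hc2 : 0 ≤ c := by
    by_contra h'
    push_neg at h'
    have : (n:ℤ) * c ≤ n * (-1) := by
      exact mul_le_mul_of_nonneg_left (by omega) (le_of_lt hn')
    linarith
  have : c = 0 := le_antisymm hc1 hc2
  subst this
  simp at hc
  omega

lemma frame_congr {a b : ℤ} (h : (a : ZMod n) = (b : ZMod n)) : frame n a = frame n b := by
  unfold frame
  have h2 : ((a + 1 : ℤ) : ZMod n) = ((b + 1 : ℤ) : ZMod n) := by push_cast; rw [h]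
  rw [h, h2]

lemma window_congr {a b : ℤ} (h : (a : ZMod n) = (b : ZMod n)) : window n a = window n b := by
  unfold window
  have h2 : ((a + 2 : ℤ) : ZMod n) = ((b + 2 : ℤ) : ZMod n) := by push_cast; rw [h]
  rw [h, h2]

lemma triangle_congr {a b : ℤ} (h : (a : ZMod n) = (b : ZMod n)) :
    triangle n a = triangle n b := by
  have h1 : ((a + 1 : ℤ) : ZMod n) = ((b + 1 : ℤ) : ZMod n) := by push_cast; rw [h]
  unfold triangle
  rw [frame_congr h, frame_congr h1, window_congr h]

lemma frame_inj (hn : 5 ≤ n) {a b : ℤ} (h : frame n a = frame n b) :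
    (a : ZMod n) = (b : ZMod n) := by
  unfold frame at h
  rw [Sym2.eq_iff] at h
  rcases h with ⟨h1, _⟩ | ⟨h1, h2⟩
  · exact h1
  · exfalso
    push_cast at h1 h2
    have h3 : ((2 : ℤ) : ZMod n) = ((0 : ℤ) : ZMod n) := by
      push_cast
      linear_combination h2 - h1
    exact castNe (by omega) (by omega) (by omega) (by omega) h3

lemma window_inj (hn : 5 ≤ n) {a b : ℤ} (h : window n a = window n b) :
    (a : ZMod n) = (b : ZMod n) := by
  unfold window at h
  rw [Sym2.eq_iff] at h
  rcases h with ⟨h1, _⟩ | ⟨h1, h2⟩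
  · exact h1
  · exfalso
    push_cast at h1 h2
    have h3 : ((4 : ℤ) : ZMod n) = ((0 : ℤ) : ZMod n) := by
      push_cast
      linear_combination h2 - h1
    exact castNe (by omega) (by omega) (by omega) (by omega) h3

lemma frame_ne_window (hn : 5 ≤ n) (a b : ℤ) : frame n a ≠ window n b := by
  intro h
  unfold frame window at h
  rw [Sym2.eq_iff] at h
  rcases h with ⟨h1, h2⟩ | ⟨h1, h2⟩
  · push_cast at h1 h2
    have h3 : ((1 : ℤ) : ZMod n) = ((0 : ℤ) : ZMod n) := by
      push_cast
      linear_combination h1 - h2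
    exact castNe (by omega) (by omega) (by omega) (by omega) h3
  · push_cast at h1 h2
    have h3 : ((3 : ℤ) : ZMod n) = ((0 : ℤ) : ZMod n) := by
      push_cast
      linear_combination h2 - h1
    exact castNe (by omega) (by omega) (by omega) (by omega) h3

lemma mem_escape_frame {k j : ℤ} {a : ℤ} (i : ℤ) (hi1 : j + 1 ≤ i) (hi2 : i ≤ j + 2*k + 1)
    (hia : (i : ZMod n) = (a : ZMod n)) : frame n a ∈ escapeRoute n k j :=
  Set.mem_union_right _ ⟨i, ⟨hi1, hi2⟩, frame_congr hia⟩

lemma mem_escape_window_left {k j : ℤ} {a : ℤ} (h : (a : ZMod n) = (j : ZMod n)) :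
    window n a ∈ escapeRoute n k j := by
  apply Set.mem_union_left
  rw [window_congr h]
  exact Set.mem_insert _ _

lemma mem_escape_window_right {k j : ℤ} {a : ℤ} (h : (a : ZMod n) = ((j + 2*k + 1 : ℤ) : ZMod n)) :
    window n a ∈ escapeRoute n k j := by
  apply Set.mem_union_left
  rw [window_congr h]
  exact Set.mem_insert_of_mem _ rfl

lemma frame_adj (hn : 5 ≤ n) (k j a : ℤ)
    (h : ∀ i : ℤ, j + 1 ≤ i → i ≤ j + 2*k + 1 → (a : ZMod n) ≠ (i : ZMod n)) :
    (stripTails n k j).Adj ((a : ℤ) : ZMod n) ((a + 1 : ℤ) : ZMod n) := by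
  rw [stripTails, deleteEdges_adj]
  constructor
  · rw [squareCycle, fromRel_adj]
    refine ⟨castNe (by omega) (by omega) (by omega) (by omega), Or.inr (Or.inl ?_)⟩
    push_cast
    ring
  · intro hmem
    have heq : s(((a : ℤ) : ZMod n), ((a + 1 : ℤ) : ZMod n)) = frame n a := rfl
    rw [heq] at hmem
    rcases hmem with hm | ⟨i, ⟨hi1, hi2⟩, hi3⟩
    · rcases hm with hm | hm
      · exact frame_ne_window hn a j hm
      · exact frame_ne_window hn a (j + 2*k + 1) hm
    · exact h i hi1 hi2 (frame_inj hn hi3).symm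

lemma window_adj (hn : 5 ≤ n) (k j a : ℤ)
    (h1 : (a : ZMod n) ≠ (j : ZMod n)) (h2 : (a : ZMod n) ≠ ((j + 2*k + 1 : ℤ) : ZMod n)) :
    (stripTails n k j).Adj ((a : ℤ) : ZMod n) ((a + 2 : ℤ) : ZMod n) := by
  rw [stripTails, deleteEdges_adj]
  constructor
  · rw [squareCycle, fromRel_adj]
    refine ⟨castNe (by omega) (by omega) (by omega) (by omega), Or.inr (Or.inr ?_)⟩
    push_cast
    ring
  · intro hmem
    have heq : s(((a : ℤ) : ZMod n), ((a + 2 : ℤ) : ZMod n)) = window n a := rfl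
    rw [heq] at hmem
    rcases hmem with hm | ⟨i, ⟨hi1, hi2⟩, hi3⟩
    · rcases hm with hm | hm
      · exact h1 (window_inj hn hm)
      · exact h2 (window_inj hn hm)
    · exact frame_ne_window hn i a hi3

end Helpers

section Main
variable {n : ℕ}

lemma stripTails_conn (hn : 5 ≤ n) (j k : ℤ) (hk0 : 0 ≤ k) (hk2 : 2*k + 1 ≤ (n:ℤ)) :
    (stripTails n k j).Connected := by
  haveI : NeZero n := ⟨by omega⟩
  rw [connected_iff]
  refine ⟨?_, ⟨0⟩⟩
  have hn' : (5:ℤ) ≤ n := by exact_mod_cast hn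
  have reach : ∀ t : ℤ, 0 ≤ t → t < (n:ℤ) →
      (stripTails n k j).Reachable ((j : ZMod n)) (((j + t : ℤ) : ZMod n)) := by
    rcases lt_or_eq_of_le hk2 with hA | hB
    · -- case A : 2k+1 < n
      have hodd : ∀ m : ℕ, 2*(m:ℤ) + 1 ≤ 2*k + 1 →
          (stripTails n k j).Reachable ((j : ZMod n)) (((j + (2*(m:ℤ)+1) : ℤ) : ZMod n)) := by
        intro m
        induction m with
        | zero =>
          intro _
          have hadj := frame_adj hn k j j (fun i hi1 hi2 =>
            castNe (by omega) (by omega) (by omega) (by omega))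
          have he : ((j + 1 : ℤ) : ZMod n) = ((j + (2*(((0:ℕ)):ℤ)+1) : ℤ) : ZMod n) := by
            push_cast; ring
          exact he ▸ hadj.reachable
        | succ m ih =>
          intro hm
          push_cast at hm
          have hr := ih (by omega)
          have hadj := window_adj hn k j (j + 2*(m:ℤ) + 1)
            (castNe (by omega) (by omega) (by omega) (by omega))
            (castNe (by omega) (by omega) (by omega) (by omega))
          have he : ((j + 2*(m:ℤ) + 1 : ℤ) : ZMod n) = ((j + (2*(m:ℤ)+1) : ℤ) : ZMod n) := by
            push_cast; ring
          have he2 : ((j + 2*(m:ℤ) + 1 + 2 : ℤ) : ZMod n)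
              = ((j + (2*(((m+1:ℕ)):ℤ)+1) : ℤ) : ZMod n) := by
            push_cast; ring
          rw [he, he2] at hadj
          exact hr.trans hadj.reachable
      have hhub : ∀ m : ℕ, (m:ℤ) ≤ (n:ℤ) - 2*k - 2 →
          (stripTails n k j).Reachable ((j : ZMod n)) (((j + n - (m:ℤ) : ℤ) : ZMod n)) := by
        intro m
        induction m with
        | zero =>
          intro _
          have he : ((j + (n:ℤ) - ((0:ℕ):ℤ) : ℤ) : ZMod n) = ((j : ℤ) : ZMod n) := by
            apply castEqDvd; exact ⟨1, by push_cast; ring⟩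
          rw [he]
        | succ m ih =>
          intro hm
          push_cast at hm
          have hr := ih (by omega)
          have hadj := frame_adj hn k j (j + (n:ℤ) - (m:ℤ) - 1) (fun i hi1 hi2 =>
            castNe (by omega) (by omega) (by omega) (by omega))
          have he : ((j + (n:ℤ) - (m:ℤ) - 1 + 1 : ℤ) : ZMod n)
              = ((j + (n:ℤ) - (m:ℤ) : ℤ) : ZMod n) := by congr 1; ring
          have he2 : ((j + (n:ℤ) - (m:ℤ) - 1 : ℤ) : ZMod n)
              = ((j + (n:ℤ) - ((m+1:ℕ):ℤ) : ℤ) : ZMod n) := by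
            push_cast; ring
          rw [he, he2] at hadj
          exact hr.trans hadj.reachable.symm
      have heven : ∀ m : ℕ, (m:ℤ) ≤ k →
          (stripTails n k j).Reachable ((j : ZMod n))
            (((j + 2*k + 2 - 2*(m:ℤ) : ℤ) : ZMod n)) := by
        intro m
        induction m with
        | zero =>
          intro _
          have hb := hhub ((n:ℤ) - 2*k - 2).toNat
            (by rw [Int.toNat_of_nonneg (by omega)])
          rw [Int.toNat_of_nonneg (by omega)] at hb
          have he : ((j + (n:ℤ) - ((n:ℤ) - 2*k - 2) : ℤ) : ZMod n)
              = ((j + 2*k + 2 - 2*((0:ℕ):ℤ) : ℤ) : ZMod n) := by congr 1; push_cast; ring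
          rw [he] at hb
          exact hb
        | succ m ih =>
          intro hm
          push_cast at hm
          have hr := ih (by omega)
          have hadj := window_adj hn k j (j + 2*k - 2*(m:ℤ))
            (castNe (by omega) (by omega) (by omega) (by omega))
            (castNe (by omega) (by omega) (by omega) (by omega))
          have he : ((j + 2*k - 2*(m:ℤ) + 2 : ℤ) : ZMod n)
              = ((j + 2*k + 2 - 2*(m:ℤ) : ℤ) : ZMod n) := by congr 1; ring
          have he2 : ((j + 2*k - 2*(m:ℤ) : ℤ) : ZMod n)
              = ((j + 2*k + 2 - 2*((m+1:ℕ):ℤ) : ℤ) : ZMod n) := by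
            push_cast; ring
          rw [he, he2] at hadj
          exact hr.trans hadj.reachable.symm
      intro t ht0 htn
      by_cases ht : t = 0
      · subst ht
        have he : ((j : ℤ) : ZMod n) = ((j + 0 : ℤ) : ZMod n) := by norm_num
        exact he ▸ Reachable.refl _
      rcases Int.even_or_odd t with ⟨m0, hm0⟩ | ⟨m0, hm0⟩
      · by_cases hle : t ≤ 2*k + 1
        · have hb := heven ((k + 1 - m0).toNat) (by rw [Int.toNat_of_nonneg (by omega)]; omega)
          rw [Int.toNat_of_nonneg (by omega)] at hb
          have he : ((j + 2*k + 2 - 2*(k + 1 - m0) : ℤ) : ZMod n)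
              = ((j + t : ℤ) : ZMod n) := by congr 1; omega
          rwa [he] at hb
        · have hb := hhub (((n:ℤ) - t).toNat) (by rw [Int.toNat_of_nonneg (by omega)]; omega)
          rw [Int.toNat_of_nonneg (by omega)] at hb
          have he : ((j + (n:ℤ) - ((n:ℤ) - t) : ℤ) : ZMod n) = ((j + t : ℤ) : ZMod n) := by
            congr 1; ring
          rwa [he] at hb
      · by_cases hle : t ≤ 2*k + 1
        · have hb := hodd (m0.toNat) (by rw [Int.toNat_of_nonneg (by omega)]; omega)
          rw [Int.toNat_of_nonneg (by omega)] at hb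
          have he : ((j + (2*m0 + 1) : ℤ) : ZMod n) = ((j + t : ℤ) : ZMod n) := by
            congr 1; omega
          rwa [he] at hb
        · have hb := hhub (((n:ℤ) - t).toNat) (by rw [Int.toNat_of_nonneg (by omega)]; omega)
          rw [Int.toNat_of_nonneg (by omega)] at hb
          have he : ((j + (n:ℤ) - ((n:ℤ) - t) : ℤ) : ZMod n) = ((j + t : ℤ) : ZMod n) := by
            congr 1; ring
          rwa [he] at hb
    · -- case B : 2k+1 = n
      have chain : ∀ m : ℕ, (m:ℤ) ≤ (n:ℤ) - 1 →
          (stripTails n k j).Reachable ((j : ZMod n)) (((j - 2*(m:ℤ) : ℤ) : ZMod n)) := by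
        intro m
        induction m with
        | zero =>
          intro _
          have he : ((j - 2*((0:ℕ):ℤ) : ℤ) : ZMod n) = ((j : ℤ) : ZMod n) := by norm_num
          rw [he]
        | succ m ih =>
          intro hm
          push_cast at hm
          have hr := ih (by omega)
          have hdvd : ¬ ((n:ℤ) ∣ (j - 2*(m:ℤ) - 2) - j) := by
            rintro ⟨c, hc⟩
            have h1 : (j - 2*(m:ℤ) - 2) - j = -2*(m:ℤ) - 2 := by ring
            rw [h1] at hc
            have hc1 : c ≤ -1 := by nlinarith
            have hc2 : -2 < c := by nlinarith
            have : c = -1 := by omega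
            subst this
            omega
          have h2 : ¬ ((n:ℤ) ∣ (j - 2*(m:ℤ) - 2) - (j + 2*k + 1)) := by
            rintro ⟨c, hc⟩
            have h1 : (j - 2*(m:ℤ) - 2) - (j + 2*k + 1) = -2*(m:ℤ) - 2 - (n:ℤ) := by omega
            rw [h1] at hc
            have hc1 : c ≤ -1 := by nlinarith
            have hc2 : -3 < c := by nlinarith
            interval_cases c <;> omega
          have hadj := window_adj hn k j (j - 2*(m:ℤ) - 2) (castNeDvd hdvd) (castNeDvd h2)
          have he : ((j - 2*(m:ℤ) - 2 + 2 : ℤ) : ZMod n) = ((j - 2*(m:ℤ) : ℤ) : ZMod n) := by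
            congr 1; ring
          have he2 : ((j - 2*(m:ℤ) - 2 : ℤ) : ZMod n)
              = ((j - 2*((m+1:ℕ):ℤ) : ℤ) : ZMod n) := by
            push_cast; ring
          rw [he, he2] at hadj
          exact hr.trans hadj.reachable.symm
      intro t ht0 htn
      rcases Int.even_or_odd t with ⟨m0, hm0⟩ | ⟨m0, hm0⟩
      · by_cases ht : t = 0
        · subst ht
          have he : ((j : ℤ) : ZMod n) = ((j + 0 : ℤ) : ZMod n) := by norm_num
          exact he ▸ Reachable.refl _
        · have hb := chain (((n:ℤ) - m0).toNat) (by rw [Int.toNat_of_nonneg (by omega)]; omega)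
          rw [Int.toNat_of_nonneg (by omega)] at hb
          have he : ((j - 2*((n:ℤ) - m0) : ℤ) : ZMod n) = ((j + t : ℤ) : ZMod n) := by
            apply castEqDvd
            exact ⟨-2, by push_cast; omega⟩
          rwa [he] at hb
      · have hb := chain ((k - m0).toNat) (by rw [Int.toNat_of_nonneg (by omega)]; omega)
        rw [Int.toNat_of_nonneg (by omega)] at hb
        have he : ((j - 2*(k - m0) : ℤ) : ZMod n) = ((j + t : ℤ) : ZMod n) := by
          apply castEqDvd
          exact ⟨-1, by push_cast; omega⟩
        rwa [he] at hb
  intro u w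
  have main : ∀ v : ZMod n, (stripTails n k j).Reachable ((j : ZMod n)) v := by
    intro v
    have ht0 : 0 ≤ ((v.val : ℤ) - j) % (n:ℤ) := Int.emod_nonneg _ (by omega)
    have htn : ((v.val : ℤ) - j) % (n:ℤ) < (n:ℤ) := Int.emod_lt_of_pos _ (by omega)
    have hr := reach (((v.val : ℤ) - j) % (n:ℤ)) ht0 htn
    have he : ((j + ((v.val : ℤ) - j) % (n:ℤ) : ℤ) : ZMod n) = v := by
      have h1 : ((j + ((v.val : ℤ) - j) % (n:ℤ) : ℤ) : ZMod n) = (((v.val : ℤ)) : ZMod n) := by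
        apply castEqDvd
        exact ⟨-(((v.val : ℤ) - j) / (n:ℤ)), by rw [Int.emod_def]; ring⟩
      rw [h1]
      push_cast
      simp [ZMod.natCast_val, ZMod.cast_id]
    rwa [he] at hr
  exact (main u).symm.trans (main w)

lemma stripTails_convex (hn : 5 ≤ n) (j k : ℤ) (hk0 : 0 ≤ k) (hk2 : 2*k + 1 ≤ (n:ℤ)) :
    IsConvex n (stripTails n k j) := by
  intro i
  obtain ⟨d, hd0, hdn, hcast⟩ :
      ∃ d : ℤ, 0 ≤ d ∧ d < (n:ℤ) ∧ ((j + d : ℤ) : ZMod n) = (i : ZMod n) :=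
    ⟨(i - j) % (n:ℤ), Int.emod_nonneg _ (by omega), Int.emod_lt_of_pos _ (by omega),
      castEqDvd ⟨-((i - j)/(n:ℤ)), by rw [Int.emod_def]; ring⟩⟩
  have htri : triangle n i = triangle n (j + d) := (triangle_congr hcast).symm
  rw [htri]
  have hsing : ∀ X : Sym2 (ZMod n),
      triangle n (j + d) ∩ (stripTails n k j).edgeSet ⊆ {X} →
      (triangle n (j + d) ∩ (stripTails n k j).edgeSet).ncard ≤ 1 := by
    intro X hsub
    have := Set.ncard_le_ncard hsub (Set.finite_singleton _)
    simpa using this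
  rcases lt_or_eq_of_le hk2 with hA | hB
  · -- case A : 2k+1 < n
    by_cases h0 : d = 0
    · left
      apply hsing (frame n (j + d))
      rintro x ⟨hx, hxE⟩
      rw [stripTails, edgeSet_deleteEdges] at hxE
      simp only [triangle, Set.mem_insert_iff, Set.mem_singleton_iff] at hx
      rcases hx with rfl | rfl | rfl
      · exact Set.mem_singleton _
      · exact absurd (mem_escape_frame (j+1) (by omega) (by omega)
          (castEqDvd ⟨0, by omega⟩)) hxE.2
      · exact absurd (mem_escape_window_left (castEqDvd ⟨0, by omega⟩)) hxE.2
    by_cases h1 : d ≤ 2*k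
    · left
      apply hsing (window n (j + d))
      rintro x ⟨hx, hxE⟩
      rw [stripTails, edgeSet_deleteEdges] at hxE
      simp only [triangle, Set.mem_insert_iff, Set.mem_singleton_iff] at hx
      rcases hx with rfl | rfl | rfl
      · exact absurd (mem_escape_frame (j+d) (by omega) (by omega)
          (castEqDvd ⟨0, by ring⟩)) hxE.2
      · exact absurd (mem_escape_frame (j+d+1) (by omega) (by omega)
          (castEqDvd ⟨0, by ring⟩)) hxE.2
      · exact Set.mem_singleton _
    by_cases h2 : d = 2*k + 1
    · left
      apply hsing (frame n (j + d + 1))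
      rintro x ⟨hx, hxE⟩
      rw [stripTails, edgeSet_deleteEdges] at hxE
      simp only [triangle, Set.mem_insert_iff, Set.mem_singleton_iff] at hx
      rcases hx with rfl | rfl | rfl
      · exact absurd (mem_escape_frame (j+d) (by omega) (by omega)
          (castEqDvd ⟨0, by ring⟩)) hxE.2
      · exact Set.mem_singleton _
      · exact absurd (mem_escape_window_right (castEqDvd ⟨0, by omega⟩)) hxE.2
    · right
      intro x hx
      simp only [triangle, Set.mem_insert_iff, Set.mem_singleton_iff] at hx
      rcases hx with rfl | rfl | rfl
      · exact (SimpleGraph.mem_edgeSet _).mpr (frame_adj hn k j (j+d)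
          (fun i0 hi1 hi2 => castNe (by omega) (by omega) (by omega) (by omega)))
      · exact (SimpleGraph.mem_edgeSet _).mpr (frame_adj hn k j (j+d+1)
          (fun i0 hi1 hi2 => castNe (by omega) (by omega) (by omega) (by omega)))
      · exact (SimpleGraph.mem_edgeSet _).mpr (window_adj hn k j (j+d)
          (castNe (by omega) (by omega) (by omega) (by omega))
          (castNe (by omega) (by omega) (by omega) (by omega)))
  · -- case B : 2k+1 = n
    left
    apply hsing (window n (j + d))
    rintro x ⟨hx, hxE⟩
    rw [stripTails, edgeSet_deleteEdges] at hxE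
    simp only [triangle, Set.mem_insert_iff, Set.mem_singleton_iff] at hx
    rcases hx with rfl | rfl | rfl
    · by_cases h0 : d = 0
      · exact absurd (mem_escape_frame (j+2*k+1) (by omega) (by omega)
          (castEqDvd ⟨1, by omega⟩)) hxE.2
      · exact absurd (mem_escape_frame (j+d) (by omega) (by omega)
          (castEqDvd ⟨0, by ring⟩)) hxE.2
    · exact absurd (mem_escape_frame (j+d+1) (by omega) (by omega)
        (castEqDvd ⟨0, by ring⟩)) hxE.2
    · exact Set.mem_singleton _

end Main

/-- The strip graph with tails `S_{n,k,j}` is a connected spanning convex subgraph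
of `C_n^2`. -/
theorem stripTails_connected_convex (n : ℕ) (hn : 5 ≤ n) (j k : ℤ)
    (hk0 : 0 ≤ k) (hk : k ≤ ⌈((n : ℚ) - 2) / 2⌉) :
    stripTails n k j ≤ squareCycle n ∧ (stripTails n k j).Connected ∧
      IsConvex n (stripTails n k j) := by
  have hk2 : 2*k + 1 ≤ (n:ℤ) := by
    have h1 : ((⌈((n : ℚ) - 2) / 2⌉ : ℤ) : ℚ) < ((n:ℚ) - 2)/2 + 1 := Int.ceil_lt_add_one _
    have h2 : (k : ℚ) ≤ ((⌈((n : ℚ) - 2) / 2⌉ : ℤ) : ℚ) := by exact_mod_cast hk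
    have h3 : (2*k : ℚ) < (n : ℚ) := by linarith
    have h4 : (2*k : ℤ) < (n : ℤ) := by exact_mod_cast h3
    omega
  refine ⟨?_, stripTails_conn hn j k hk0 hk2, stripTails_convex hn j k hk0 hk2⟩
  rw [stripTails]
  exact SimpleGraph.deleteEdges_le _
end
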